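/- arXiv:1911.04727 — 8 statements merged into one kernel-verified Lean document; each statement's English description precedes it below -/
import Mathlib

section
/- Let M be a bounded modular lattice and n > 1 an integer. The following are equivalent: (1) there exists a strict n-cube in M; (2) there exist a_1, …, a_n ∈ M such that for every i with 1 ≤ i ≤ n, the join a_1 ∨ ⋯ ∨ a_n is not equal to the join a_1 ∨ ⋯ ∨ â_i ∨ ⋯ ∨ a_n obtained by omitting a_i; (3) there exist a_1, …, a_n ∈ M such that for every i with 1 ≤ i ≤ n, the meet a_1 ∧ ⋯ ∧ a_n is not equal to the meet a_1 ∧ ⋯ ∧ â_i ∧ ⋯ ∧ a_n obtained by omitting a_i. -/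
/-!
Given `a`, put `b i := ⨆_{j ≠ i} a j`. Each `a i` lies below every `b j` with `j ≠ i` and
`a i ⊔ b i = ⨆ a`, so `b i` complements `⨅_{j ∈ S} b j` below `⨆ a` whenever `i ∉ S`; by
modularity `S ↦ (⨅_{j ∈ S} b j) ⊓ ⨆ a` then turns intersections into joins, and
`s ↦ (⨅_{j ∉ s} b j) ⊓ ⨆ a` is a cube. It is injective exactly when no `b i` equals `⨆ a`.
Conversely the values `f {i}` of a strict cube form a join-irredundant family, since
`f s = f ∅ ⊔ ⨆_{i ∈ s} f {i}`. The meet version is the join version in `Mᵒᵈ`, to which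
`s ↦ f sᶜ` carries strict cubes.
-/

/-- A strict `n`-cube in a lattice: an injective map from the powerset of `{1,…,n}`
preserving unions as joins and intersections as meets. -/
def IsStrictCube {M : Type*} [Lattice M] {n : ℕ} (f : Set (Fin n) → M) : Prop :=
  Function.Injective f ∧ (∀ s t : Set (Fin n), f (s ∪ t) = f s ⊔ f t) ∧
    (∀ s t : Set (Fin n), f (s ∩ t) = f s ⊓ f t)

open Finset OrderDual

section Modular

variable {ι M : Type*} [DecidableEq ι] [Lattice M] [OrderTop M] [IsModularLattice M]
  {b : ι → M} {u : M}

theorem inf_inf_sup_inf_inf_eq_inter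
    (hb : ∀ (S : Finset ι) (i : ι), i ∉ S → b i ⊔ (S.inf b ⊓ u) = u) (A B : Finset ι) :
    (A.inf b ⊓ u) ⊔ (B.inf b ⊓ u) = (A ∩ B).inf b ⊓ u := by
  induction B using Finset.induction_on with
  | empty => simp
  | insert i B hiB ih =>
    rw [inf_insert, inf_assoc]
    by_cases hiA : i ∈ A
    · have hA : A.inf b ⊓ u ≤ b i := inf_le_left.trans (inf_le hiA)
      rw [inter_insert_of_mem hiA, inf_insert, inf_assoc, ← ih, inf_comm (b i),
        ← sup_inf_assoc_of_le _ hA, inf_comm]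
    · rw [inter_insert_of_notMem hiA, ← ih]
      refine le_antisymm (sup_le_sup_left inf_le_right _) (sup_le le_sup_left ?_)
      have hAB : (A ∪ B).inf b ⊓ u ≤ B.inf b ⊓ u :=
        inf_le_inf_right u (inf_mono subset_union_right)
      calc B.inf b ⊓ u = ((A ∪ B).inf b ⊓ u ⊔ b i) ⊓ (B.inf b ⊓ u) := by
            rw [sup_comm, hb _ _ (by simp [hiA, hiB]), inf_eq_right.2 inf_le_right]
        _ = (A ∪ B).inf b ⊓ u ⊔ b i ⊓ (B.inf b ⊓ u) := sup_inf_assoc_of_le _ hAB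
        _ ≤ A.inf b ⊓ u ⊔ b i ⊓ (B.inf b ⊓ u) :=
            sup_le_sup_right (inf_le_inf_right u (inf_mono subset_union_left)) _

end Modular

section SupIrredundant

variable {ι M : Type*} [Fintype ι] [DecidableEq ι] [Lattice M] [BoundedOrder M] (a : ι → M)

theorem le_sup_erase_of_ne {i j : ι} (h : i ≠ j) : a i ≤ (univ.erase j).sup a :=
  le_sup (mem_erase.2 ⟨h, mem_univ i⟩)

theorem sup_sup_erase (i : ι) : a i ⊔ (univ.erase i).sup a = univ.sup a := by
  rw [← sup_insert, insert_erase (mem_univ i)]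

theorem sup_erase_sup_inf_inf_eq (S : Finset ι) {i : ι} (hi : i ∉ S) :
    (univ.erase i).sup a ⊔ (S.inf (fun j ↦ (univ.erase j).sup a) ⊓ univ.sup a) = univ.sup a := by
  have hai : a i ≤ S.inf (fun j ↦ (univ.erase j).sup a) ⊓ univ.sup a :=
    le_inf (Finset.le_inf fun j hj ↦ le_sup_erase_of_ne a (ne_of_mem_of_not_mem hj hi).symm)
      (le_sup (mem_univ i))
  refine le_antisymm (sup_le (sup_mono (subset_univ _)) inf_le_right) ?_
  calc univ.sup a = a i ⊔ (univ.erase i).sup a := (sup_sup_erase a i).symm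
    _ ≤ _ := by rw [sup_comm]; exact sup_le_sup_left hai _

-- The factor `univ.sup a` only matters at `s = univ`, where the empty infimum is `⊤`.
open Classical in
noncomputable def cubeOfFamily (s : Set ι) : M :=
  {i | i ∉ s}.toFinset.inf (fun i ↦ (univ.erase i).sup a) ⊓ univ.sup a

variable {a}

theorem cubeOfFamily_le_erase {s : Set ι} {i : ι} (hi : i ∉ s) :
    cubeOfFamily a s ≤ (univ.erase i).sup a :=
  inf_le_left.trans (Finset.inf_le (by simpa using hi))

theorem cubeOfFamily_sup_erase {s : Set ι} {i : ι} (hi : i ∈ s) :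
    cubeOfFamily a s ⊔ (univ.erase i).sup a = univ.sup a := by
  rw [sup_comm]
  exact sup_erase_sup_inf_inf_eq a _ (by simpa using hi)

theorem subset_of_cubeOfFamily_le (ha : ∀ i, univ.sup a ≠ (univ.erase i).sup a)
    {s t : Set ι} (h : cubeOfFamily a s ≤ cubeOfFamily a t) : s ⊆ t := by
  intro i his
  by_contra hit
  apply ha i
  rw [← cubeOfFamily_sup_erase his, sup_eq_right]
  exact h.trans (cubeOfFamily_le_erase hit)

theorem cubeOfFamily_union [IsModularLattice M] (s t : Set ι) :
    cubeOfFamily a (s ∪ t) = cubeOfFamily a s ⊔ cubeOfFamily a t := by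
  classical
  rw [cubeOfFamily, cubeOfFamily, cubeOfFamily,
    inf_inf_sup_inf_inf_eq_inter (fun S i hi ↦ sup_erase_sup_inf_inf_eq a S hi)]
  congr 3
  ext; simp

theorem cubeOfFamily_inter (s t : Set ι) :
    cubeOfFamily a (s ∩ t) = cubeOfFamily a s ⊓ cubeOfFamily a t := by
  classical
  rw [cubeOfFamily, cubeOfFamily, cubeOfFamily, ← inf_inf_distrib_right, ← inf_union]
  congr 3
  ext; simp [imp_iff_not_or]

end SupIrredundant

theorem isStrictCube_cubeOfFamily {M : Type*} [Lattice M] [BoundedOrder M] [IsModularLattice M]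
    {n : ℕ} {a : Fin n → M} (ha : ∀ i, univ.sup a ≠ (univ.erase i).sup a) :
    IsStrictCube (cubeOfFamily a) :=
  ⟨fun _ _ h ↦ (subset_of_cubeOfFamily_le ha h.le).antisymm (subset_of_cubeOfFamily_le ha h.ge),
    cubeOfFamily_union, cubeOfFamily_inter⟩

theorem IsStrictCube.apply_coe_finset {M : Type*} [Lattice M] [OrderBot M] {n : ℕ}
    {f : Set (Fin n) → M} (hf : IsStrictCube f) (S : Finset (Fin n)) :
    f S = f ∅ ⊔ S.sup (fun i ↦ f {i}) := by
  induction S using Finset.induction_on with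
  | empty => simp
  | insert i S _ ih =>
    rw [coe_insert, Set.insert_eq, hf.2.1, ih, sup_insert, sup_left_comm]

theorem IsStrictCube.sup_singleton_ne {M : Type*} [Lattice M] [OrderBot M] {n : ℕ}
    {f : Set (Fin n) → M} (hf : IsStrictCube f) (i : Fin n) :
    univ.sup (fun j ↦ f {j}) ≠ (univ.erase i).sup (fun j ↦ f {j}) := by
  intro h
  have hfi : f (univ : Finset (Fin n)) = f (univ.erase i) := by
    rw [hf.apply_coe_finset, hf.apply_coe_finset, h]
  simpa [Set.ext_iff] using hf.1 hfi

theorem exists_isStrictCube_iff_sup_irredundant {M : Type*} [Lattice M] [BoundedOrder M]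
    [IsModularLattice M] {n : ℕ} :
    (∃ f : Set (Fin n) → M, IsStrictCube f) ↔
      ∃ a : Fin n → M, ∀ i, univ.sup a ≠ (univ.erase i).sup a :=
  ⟨fun ⟨_, hf⟩ ↦ ⟨_, hf.sup_singleton_ne⟩, fun ⟨_, ha⟩ ↦ ⟨_, isStrictCube_cubeOfFamily ha⟩⟩

theorem IsStrictCube.dual {M : Type*} [Lattice M] {n : ℕ} {f : Set (Fin n) → M}
    (hf : IsStrictCube f) : IsStrictCube (fun s ↦ toDual (f sᶜ)) :=
  ⟨fun _ _ h ↦ compl_injective (hf.1 h),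
    fun s t ↦ congrArg toDual <| (congrArg f (Set.compl_union s t)).trans (hf.2.2 _ _),
    fun s t ↦ congrArg toDual <| (congrArg f (Set.compl_inter s t)).trans (hf.2.1 _ _)⟩

theorem exists_isStrictCube_iff_dual {M : Type*} [Lattice M] {n : ℕ} :
    (∃ f : Set (Fin n) → M, IsStrictCube f) ↔ ∃ g : Set (Fin n) → Mᵒᵈ, IsStrictCube g :=
  ⟨fun ⟨_, hf⟩ ↦ ⟨_, hf.dual⟩, fun ⟨_, hg⟩ ↦ ⟨_, hg.dual⟩⟩

theorem strict_cube_iff_join_irredundant_and_iff_meet_irredundant_general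
    {M : Type*} [Lattice M] [BoundedOrder M] [IsModularLattice M]
    {n : ℕ} :
    ((∃ f : Set (Fin n) → M, IsStrictCube f) ↔
      ∃ a : Fin n → M, ∀ i : Fin n,
        Finset.univ.sup a ≠ (Finset.univ.erase i).sup a) ∧
    ((∃ f : Set (Fin n) → M, IsStrictCube f) ↔
      ∃ a : Fin n → M, ∀ i : Fin n,
        Finset.univ.inf a ≠ (Finset.univ.erase i).inf a) :=
  -- `Finset.sup` in `Mᵒᵈ` is `Finset.inf` in `M` by definition.
  ⟨exists_isStrictCube_iff_sup_irredundant,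
    exists_isStrictCube_iff_dual.trans exists_isStrictCube_iff_sup_irredundant⟩

/-- In a bounded modular lattice, for `n > 1`, the existence of a strict `n`-cube is
equivalent to the existence of `a₁, …, aₙ` whose join strictly drops when any one
element is omitted, and also to the dual statement for meets. -/
theorem strict_cube_iff_join_irredundant_and_iff_meet_irredundant
    {M : Type*} [Lattice M] [BoundedOrder M] [IsModularLattice M]
    {n : ℕ} (hn : 1 < n) :
    ((∃ f : Set (Fin n) → M, IsStrictCube f) ↔
      ∃ a : Fin n → M, ∀ i : Fin n,
        Finset.univ.sup a ≠ (Finset.univ.erase i).sup a) ∧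
    ((∃ f : Set (Fin n) → M, IsStrictCube f) ↔
      ∃ a : Fin n → M, ∀ i : Fin n,
        Finset.univ.inf a ≠ (Finset.univ.erase i).inf a) :=
  strict_cube_iff_join_irredundant_and_iff_meet_irredundant_general
end

section
/- Let K be a field, n ≥ 1, and let O_1, …, O_n be pairwise incomparable valuation subrings of K (for i ≠ j, neither O_i ⊆ O_j nor O_j ⊆ O_i). Let R = O_1 ∩ ⋯ ∩ O_n. Then the lattice of R-submodules of K has reduced rank exactly n: it contains a strict n-cube but contains no strict (n+1)-cube. -/
/-!
Write `v i` for the valuation of `O i`. Given `x ∈ K`, choose a prime `p` that, at each `O i`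
containing `x`, is neither the residue characteristic nor the order of the residue of `x`. Then
`g = 1 + x + ⋯ + x ^ (p - 1)` is a unit at those places and has value `v i x ^ (p - 1)` at the
others, so `g⁻¹` is a denominator of `x` in `R` which is a unit wherever `x` is integral: `O i`
is the localization of `R` at its centre. Incomparability then yields elements of `R` that are
units at one place and small at the others, and with them an `R`-submodule of `K` is recovered
from its localizations. As the `O i`-submodules of `K` form a chain, for `x ∈ A` and `y ∈ B`
one of them lies locally at `O i` in `A ⊓ B`; in a strict cube on more than `n` points two
singletons would therefore leave `f ∅` at the same place. Conversely, for `c i ∈ R` small at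
`O i` and a unit elsewhere, `u ↦ {y | v j (c j * y) < 1 for j ∈ u, v j y < 1 for j ∉ u}` is a
strict `n`-cube: meets are computed pointwise and joins locally.
-/

open Finset

namespace IsStrictCube

variable {M : Type*} [Lattice M] {n : ℕ} {f : Set (Fin n) → M}

theorem monotone (hf : IsStrictCube f) : Monotone f := fun s t hst =>
  calc f s ≤ f s ⊔ f t := le_sup_left
    _ = f t := by rw [← hf.2.1, Set.union_eq_self_of_subset_left hst]

theorem empty_lt_singleton (hf : IsStrictCube f) (d : Fin n) : f ∅ < f {d} :=
  (hf.monotone (Set.empty_subset _)).lt_of_ne fun h => Set.singleton_ne_empty d (hf.1 h).symm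

theorem singleton_inf_singleton (hf : IsStrictCube f) {d e : Fin n} (hde : d ≠ e) :
    f {d} ⊓ f {e} = f ∅ := by
  rw [← hf.2.2, Set.singleton_inter_eq_empty.2 (Set.notMem_singleton_iff.2 hde)]

end IsStrictCube

theorem setOf_prime_geom_sum_eq_zero_subsingleton {A : Type*} [Ring A] [Nontrivial A] (a : A) :
    {p : ℕ | p.Prime ∧ ∑ i ∈ range p, a ^ i = 0}.Subsingleton := by
  classical
  suffices h : ∀ p : ℕ, p.Prime → ∑ i ∈ range p, a ^ i = 0 →
      p = if a = 1 then ringChar A else orderOf a by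
    rintro p ⟨hp, hpa⟩ q ⟨hq, hqa⟩
    rw [h p hp hpa, h q hq hqa]
  intro p hp hsum
  split_ifs with ha
  · subst ha
    simp only [one_pow, sum_const, card_range, nsmul_eq_mul, mul_one] at hsum
    exact ((hp.eq_one_or_self_of_dvd _ ((ringChar.spec A p).1 hsum)).resolve_left
      CharP.ringChar_ne_one).symm
  · have hpow : a ^ p = 1 := by
      rw [← sub_eq_zero, ← geom_sum_mul, hsum, zero_mul]
    exact ((hp.eq_one_or_self_of_dvd _ (orderOf_dvd_of_pow_eq_one hpow)).resolve_left
      (mt orderOf_eq_one_iff.1 ha)).symm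

theorem Nat.exists_prime_forall_notMem {ι : Type*} [Finite ι] {S : ι → Set ℕ}
    (hS : ∀ i, (S i).Finite) : ∃ p, p.Prime ∧ ∀ i, p ∉ S i := by
  obtain ⟨p, hp, hpS⟩ :=
    Nat.infinite_setOfPred_prime.exists_notMem_finite (Set.finite_iUnion hS)
  exact ⟨p, hp, fun i hi => hpS (Set.mem_iUnion_of_mem i hi)⟩

theorem Valuation.map_geom_sum_of_one_lt {A Γ₀ : Type*} [Ring A]
    [LinearOrderedCommGroupWithZero Γ₀] (v : Valuation A Γ₀) {x : A} (hx : 1 < v x) {n : ℕ}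
    (hn : n ≠ 0) : v (∑ i ∈ range n, x ^ i) = v x ^ (n - 1) := by
  classical
  rw [v.map_sum_eq_of_lt (j := n - 1) (by simp; omega), v.map_pow]
  intro i hi
  simp only [mem_sdiff, mem_range, mem_singleton] at hi
  rw [v.map_pow, v.map_pow]
  exact pow_lt_pow_right₀ hx (by omega)

namespace ValuationSubring

variable {K : Type*} [Field K] (A : ValuationSubring K)

theorem setOf_prime_valuation_geom_sum_lt_one_subsingleton {x : K} (hx : x ∈ A) :
    {p : ℕ | p.Prime ∧ A.valuation (∑ i ∈ range p, x ^ i) < 1}.Subsingleton := by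
  refine (setOf_prime_geom_sum_eq_zero_subsingleton
    (IsLocalRing.residue A ⟨x, hx⟩)).anti fun p ⟨hp, hlt⟩ => ⟨hp, ?_⟩
  simp only [← map_pow, ← map_sum, IsLocalRing.residue_eq_zero_iff, valuation_lt_one_iff]
  simpa using hlt

theorem valuation_lt_one_of_mul_mem {s x : K} (h : s * x ∈ A) (hx : x ∉ A) :
    A.valuation s < 1 := by
  by_contra! hs
  refine hx ((A.valuation_le_one_iff x).1 ?_)
  calc A.valuation x ≤ A.valuation s * A.valuation x := le_mul_of_one_le_left' hs
    _ = A.valuation (s * x) := (map_mul _ _ _).symm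
    _ ≤ 1 := (A.valuation_le_one_iff _).2 h

end ValuationSubring

section Places

variable {K : Type*} [Field K] {ι : Type*} (O : ι → ValuationSubring K)

theorem exists_denominator [Finite ι] (x : K) :
    ∃ s : K, ∀ j, s ∈ O j ∧ s * x ∈ O j ∧ (x ∈ O j → (O j).valuation s = 1) := by
  obtain ⟨p, hp, hgood⟩ := Nat.exists_prime_forall_notMem (S := fun j =>
    {p | p.Prime ∧ x ∈ O j ∧ (O j).valuation (∑ i ∈ range p, x ^ i) < 1}) fun j => by
    by_cases hx : x ∈ O j
    · exact ((O j).setOf_prime_valuation_geom_sum_lt_one_subsingleton hx).anti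
        (fun p hp => ⟨hp.1, hp.2.2⟩) |>.finite
    · exact Set.finite_empty.subset fun p hp => hx hp.2.1
  refine ⟨(∑ i ∈ range p, x ^ i)⁻¹, fun j => ?_⟩
  simp only [← (O j).valuation_le_one_iff, map_mul, map_inv₀]
  by_cases hx : (O j).valuation x ≤ 1
  · have hg : (O j).valuation (∑ i ∈ range p, x ^ i) = 1 := by
      refine le_antisymm ((O j).valuation.map_sum_le fun i _ => ?_)
        (not_lt.1 fun h => hgood j ⟨hp, ((O j).valuation_le_one_iff x).1 hx, h⟩)
      rw [map_pow]
      exact pow_le_one₀ zero_le hx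
    simp [hg, hx]
  · rw [not_le] at hx
    rw [(O j).valuation.map_geom_sum_of_one_lt hx hp.ne_zero,
      inv_mul_le_one₀ (pow_pos (zero_lt_one.trans hx) _)]
    refine ⟨inv_le_one_of_one_le₀ (one_le_pow₀ hx.le), ?_, fun h => (hx.not_ge h).elim⟩
    exact le_self_pow₀ hx.le (by have := hp.two_le; omega)

theorem exists_mem_valuation_eq_one_lt_one [Finite ι] (hinc : Pairwise fun i j => ¬O i ≤ O j)
    (k : ι) :
    ∃ y : K, (∀ j, y ∈ O j) ∧ (O k).valuation y = 1 ∧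
      ∀ j ≠ k, (O j).valuation y < 1 := by
  have ht : ∀ j, ∃ t : K, (∀ l, t ∈ O l) ∧ (O k).valuation t = 1 ∧
      (j ≠ k → (O j).valuation t < 1) := by
    intro j
    rcases eq_or_ne j k with rfl | hjk
    · exact ⟨1, fun l => one_mem _, map_one _, fun h => (h rfl).elim⟩
    obtain ⟨x, hxk, hxj⟩ := SetLike.not_le_iff_exists.1 (hinc hjk.symm)
    obtain ⟨s, hs⟩ := exists_denominator O x
    exact ⟨s, fun l => (hs l).1, (hs k).2.2 hxk,
      fun _ => (O j).valuation_lt_one_of_mul_mem (hs j).2.1 hxj⟩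
  choose t ht_mem ht_one ht_lt using ht
  classical
  cases nonempty_fintype ι
  refine ⟨∏ j, t j, fun l => prod_mem fun j _ => ht_mem j l, by simp [ht_one], fun j hj => ?_⟩
  rw [map_prod, ← mul_prod_erase _ _ (mem_univ j)]
  exact mul_lt_one_of_lt_of_le (ht_lt j hj)
    (prod_le_one' fun l _ => ((O j).valuation_le_one_iff _).2 (ht_mem l j))

theorem exists_valuation_lt_one_eq_one [Finite ι] (hinc : Pairwise fun i j => ¬O i ≤ O j) :
    ∃ c : ι → K, ∀ i, (O i).valuation (c i) < 1 ∧
      ∀ j ≠ i, (O j).valuation (c i) = 1 := by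
  classical
  cases nonempty_fintype ι
  choose y _ hy_one hy_lt using exists_mem_valuation_eq_one_lt_one O hinc
  refine ⟨fun i => ∑ k ∈ univ.erase i, y k, fun i => ⟨?_, fun j hj => ?_⟩⟩
  · exact (O i).valuation.map_sum_lt one_ne_zero fun k hk => hy_lt k i (ne_of_mem_erase hk).symm
  · rw [(O j).valuation.map_sum_eq_of_lt (mem_erase.2 ⟨hj, mem_univ j⟩), hy_one]
    intro k hk
    rw [hy_one]
    exact hy_lt k j fun h => by simp [h] at hk

end Places


section Intersection

variable {K : Type*} [Field K] {ι : Type*} (O : ι → ValuationSubring K) (R : Subring K)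

theorem mem_iff_of_coe_eq_iInter (hR : (R : Set K) = ⋂ i, (O i : Set K)) {x : K} :
    x ∈ R ↔ ∀ i, x ∈ O i := by
  rw [← SetLike.mem_coe, hR, Set.mem_iInter]
  rfl

def MemLocalizationAt (A : ValuationSubring K) (N : Submodule R K) (x : K) : Prop :=
  ∃ s : R, A.valuation s = 1 ∧ s • x ∈ N

theorem isUnit_of_forall_valuation_eq_one [Nonempty ι] (hR : (R : Set K) = ⋂ i, (O i : Set K))
    {r : R} (hr : ∀ i, (O i).valuation r = 1) : IsUnit r := by
  have hr0 : (r : K) ≠ 0 := fun h0 => by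
    simpa [h0] using hr (Classical.arbitrary ι)
  have hinv : (r : K)⁻¹ ∈ R := (mem_iff_of_coe_eq_iInter O R hR).2 fun i => by
    rw [← (O i).valuation_le_one_iff, map_inv₀, hr, inv_one]
  exact .of_mul_eq_one ⟨_, hinv⟩ (Subtype.ext (mul_inv_cancel₀ hr0))

theorem mem_of_forall_memLocalizationAt [Finite ι] [Nonempty ι]
    (hinc : Pairwise fun i j => ¬O i ≤ O j) (hR : (R : Set K) = ⋂ i, (O i : Set K))
    {N : Submodule R K} {x : K} (h : ∀ i, MemLocalizationAt R (O i) N x) : x ∈ N := by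
  classical
  cases nonempty_fintype ι
  choose s hs_one hs_mem using h
  choose y hy_mem hy_one hy_lt using exists_mem_valuation_eq_one_lt_one O hinc
  let σ : R := ∑ i, ⟨y i, (mem_iff_of_coe_eq_iInter O R hR).2 (hy_mem i)⟩ * s i
  have hσ : ∀ j, (O j).valuation σ = 1 := fun j => by
    have hs_le : ∀ i, (O j).valuation (s i) ≤ 1 := fun i =>
      ((O j).valuation_le_one_iff _).2 ((mem_iff_of_coe_eq_iInter O R hR).1 (s i).2 j)
    simp only [σ, AddSubmonoidClass.coe_finsetSum, MulMemClass.coe_mul]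
    have hjj : (O j).valuation (y j * s j) = 1 := by rw [map_mul, hy_one, hs_one, one_mul]
    rw [(O j).valuation.map_sum_eq_of_lt (mem_univ j), hjj]
    intro i hi
    rw [hjj, map_mul]
    exact (mul_le_of_le_one_right' (hs_le i)).trans_lt (hy_lt i j (Ne.symm (by simpa using hi)))
  rw [← Submodule.smul_mem_iff_of_isUnit N (isUnit_of_forall_valuation_eq_one O R hR hσ)]
  simp only [σ, sum_smul, mul_smul]
  exact N.sum_mem fun i _ => N.smul_mem _ (hs_mem i)

theorem memLocalizationAt_or [Finite ι] (hR : (R : Set K) = ⋂ i, (O i : Set K)) (i : ι)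
    {A B N : Submodule R K} (hAB : A ⊓ B ≤ N) {x y : K} (hx : x ∈ A) (hy : y ∈ B) :
    MemLocalizationAt R (O i) N x ∨ MemLocalizationAt R (O i) N y := by
  wlog hle : (O i).valuation y ≤ (O i).valuation x generalizing A B x y
  · exact (this (inf_comm A B ▸ hAB) hy hx (le_of_not_ge hle)).symm
  rcases eq_or_ne x 0 with rfl | hx0
  · exact .inl ⟨1, map_one _, by simp⟩
  have hyx : y / x ∈ O i := by
    rw [← (O i).valuation_le_one_iff, map_div₀]
    exact div_le_one_of_le₀ hle zero_le
  obtain ⟨s, hs⟩ := exists_denominator O (y / x)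
  have hsR : s ∈ R := (mem_iff_of_coe_eq_iInter O R hR).2 fun j => (hs j).1
  have hsyxR : s * (y / x) ∈ R := (mem_iff_of_coe_eq_iInter O R hR).2 fun j => (hs j).2.1
  have hsyA : (⟨s, hsR⟩ : R) • y ∈ A := by
    have h := A.smul_mem ⟨s * (y / x), hsyxR⟩ hx
    rwa [Subring.smul_def, smul_eq_mul, mul_assoc, div_mul_cancel₀ y hx0] at h
  exact .inr ⟨⟨s, hsR⟩, (hs i).2.2 hyx, hAB ⟨hsyA, B.smul_mem _ hy⟩⟩

theorem not_isStrictCube_of_card_lt [Fintype ι] [Nonempty ι]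
    (hinc : Pairwise fun i j => ¬O i ≤ O j) (hR : (R : Set K) = ⋂ i, (O i : Set K))
    {m : ℕ} (hm : Fintype.card ι < m) (f : Set (Fin m) → Submodule R K) :
    ¬IsStrictCube f := by
  intro hf
  choose x hx_mem hx_notMem using fun d => SetLike.exists_of_lt (hf.empty_lt_singleton d)
  have hloc : ∀ d, ∃ i, ¬MemLocalizationAt R (O i) (f ∅) (x d) := fun d => by
    by_contra! h
    exact hx_notMem d (mem_of_forall_memLocalizationAt O R hinc hR h)
  choose I hI using hloc
  obtain ⟨d, e, hde, hIde⟩ := Fintype.exists_ne_map_eq_of_card_lt I (by simpa using hm)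
  rcases memLocalizationAt_or O R hR (I d) (hf.singleton_inf_singleton hde).le (hx_mem d)
    (hx_mem e) with h | h
  · exact hI d h
  · exact hI e (hIde ▸ h)

end Intersection

theorem Set.mulIndicator_apply_mem {α M S : Type*} [One M] [SetLike S M] [OneMemClass S M]
    {A : S} {f : α → M} {a : α} (ha : f a ∈ A) (s : Set α) : s.mulIndicator f a ∈ A := by
  unfold Set.mulIndicator
  split_ifs
  exacts [ha, one_mem A]

section Cube

variable {K : Type*} [Field K] {ι : Type*}

/-- Strict inequalities, i.e. maximal ideals rather than the rings `O j`, keep the cube strict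
also for `n = 1` and `O 0 = K`, where necessarily `c 0 = 0`. -/
def cubeSubmodule (O : ι → ValuationSubring K) (R : Subring K)
    (hR : (R : Set K) = ⋂ i, (O i : Set K)) (c : ι → K) (u : Set ι) : Submodule R K where
  carrier := {y | ∀ j, (O j).valuation (u.mulIndicator c j * y) < 1}
  add_mem' {a b} ha hb j := by
    rw [mul_add]
    exact ((O j).valuation.map_add _ _).trans_lt (max_lt (ha j) (hb j))
  zero_mem' j := by simp
  smul_mem' r y hy j := by
    rw [Subring.smul_def, smul_eq_mul, mul_left_comm, map_mul]
    exact (mul_le_of_le_one_left' (((O j).valuation_le_one_iff _).2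
      ((mem_iff_of_coe_eq_iInter O R hR).1 r.2 j))).trans_lt (hy j)

variable {O : ι → ValuationSubring K} {R : Subring K} {hR : (R : Set K) = ⋂ i, (O i : Set K)}
  {c : ι → K}

theorem cubeSubmodule_mono (hc : ∀ j, c j ∈ O j) : Monotone (cubeSubmodule O R hR c) := by
  intro u u' huu' y hy j
  by_cases hj : j ∈ u
  · simpa only [Set.mulIndicator_of_mem hj, Set.mulIndicator_of_mem (huu' hj)] using hy j
  · have hyj := hy j
    rw [Set.mulIndicator_of_notMem hj, one_mul] at hyj
    rw [map_mul]
    exact (mul_le_of_le_one_left'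
      (((O j).valuation_le_one_iff _).2 (Set.mulIndicator_apply_mem (hc j) u'))).trans_lt hyj

theorem cubeSubmodule_inter (hc : ∀ j, c j ∈ O j) (u u' : Set ι) :
    cubeSubmodule O R hR c (u ∩ u') = cubeSubmodule O R hR c u ⊓ cubeSubmodule O R hR c u' := by
  refine le_antisymm (le_inf (cubeSubmodule_mono hc Set.inter_subset_left)
    (cubeSubmodule_mono hc Set.inter_subset_right)) ?_
  rintro y ⟨hyu, hyu'⟩ j
  rw [← Set.mulIndicator_mulIndicator]
  by_cases hj : j ∈ u
  · rw [Set.mulIndicator_of_mem hj]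
    exact hyu' j
  · simpa only [Set.mulIndicator_of_notMem hj] using hyu j

theorem mem_of_valuation_lt_one_eq_one
    (hc : ∀ i, (O i).valuation (c i) < 1 ∧ ∀ j ≠ i, (O j).valuation (c i) = 1) (i j : ι) :
    c i ∈ O j := by
  rw [← (O j).valuation_le_one_iff]
  rcases eq_or_ne j i with rfl | hji
  exacts [(hc j).1.le, ((hc i).2 j hji).le]

theorem valuation_prod_erase_eq_one [Fintype ι] [DecidableEq ι]
    (hc : ∀ i, (O i).valuation (c i) < 1 ∧ ∀ j ≠ i, (O j).valuation (c i) = 1) (i : ι) :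
    (O i).valuation (∏ j ∈ univ.erase i, c j) = 1 := by
  rw [map_prod]
  exact prod_eq_one fun j hj => (hc j).2 i (ne_of_mem_erase hj).symm

theorem mul_mem_cubeSubmodule_inter_singleton [Fintype ι] [DecidableEq ι]
    (hc : ∀ i, (O i).valuation (c i) < 1 ∧ ∀ j ≠ i, (O j).valuation (c i) = 1) {u : Set ι}
    {y : K} (hy : y ∈ cubeSubmodule O R hR c u) (i : ι) :
    (∏ j ∈ univ.erase i, c j) * y ∈ cubeSubmodule O R hR c (u ∩ {i}) := by
  have hc_mem := mem_of_valuation_lt_one_eq_one hc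
  intro j
  rcases eq_or_ne j i with rfl | hji
  · have hweight : (u ∩ {j}).mulIndicator c j = u.mulIndicator c j := by
      by_cases hj : j ∈ u <;> simp [hj]
    rw [hweight, mul_left_comm, map_mul, valuation_prod_erase_eq_one hc, one_mul]
    exact hy j
  · have hcy : (O j).valuation (c j * y) < 1 := by
      simpa only [Set.mulIndicator_univ] using
        cubeSubmodule_mono (fun j => hc_mem j j) (Set.subset_univ u) hy j
    rw [Set.mulIndicator_of_notMem (fun h => hji h.2), one_mul,
      ← mul_prod_erase _ _ (mem_erase.2 ⟨hji, mem_univ j⟩), mul_right_comm, map_mul]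
    exact (mul_le_of_le_one_right' (((O j).valuation_le_one_iff _).2
      (prod_mem fun k _ => hc_mem k j))).trans_lt hcy

theorem cubeSubmodule_union [Fintype ι] [Nonempty ι] (hinc : Pairwise fun i j => ¬O i ≤ O j)
    (hc : ∀ i, (O i).valuation (c i) < 1 ∧ ∀ j ≠ i, (O j).valuation (c i) = 1)
    (u u' : Set ι) :
    cubeSubmodule O R hR c (u ∪ u') = cubeSubmodule O R hR c u ⊔ cubeSubmodule O R hR c u' := by
  classical
  have hc_mem := mem_of_valuation_lt_one_eq_one hc
  refine le_antisymm (fun y hy => mem_of_forall_memLocalizationAt O R hinc hR fun i => ?_)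
    (sup_le (cubeSubmodule_mono (fun j => hc_mem j j) Set.subset_union_left)
      (cubeSubmodule_mono (fun j => hc_mem j j) Set.subset_union_right))
  refine ⟨⟨∏ j ∈ univ.erase i, c j, (mem_iff_of_coe_eq_iInter O R hR).2 fun k =>
    prod_mem fun j _ => hc_mem j k⟩, valuation_prod_erase_eq_one hc i, ?_⟩
  have hloc := mul_mem_cubeSubmodule_inter_singleton hc hy i
  by_cases hi : i ∈ u
  · exact Submodule.mem_sup_left (cubeSubmodule_mono (fun j => hc_mem j j)
      (Set.inter_subset_right.trans (Set.singleton_subset_iff.2 hi)) hloc)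
  · refine Submodule.mem_sup_right (cubeSubmodule_mono (fun j => hc_mem j j) ?_ hloc)
    rintro j ⟨hj, rfl⟩
    exact hj.resolve_left hi

theorem cubeSubmodule_injective [Fintype ι]
    (hc : ∀ i, (O i).valuation (c i) < 1 ∧ ∀ j ≠ i, (O j).valuation (c i) = 1) :
    Function.Injective (cubeSubmodule O R hR c) := by
  classical
  have hc_mem := mem_of_valuation_lt_one_eq_one hc
  suffices h : ∀ u u', cubeSubmodule O R hR c u ≤ cubeSubmodule O R hR c u' → u ⊆ u' from
    fun u u' huu' => (h u u' huu'.le).antisymm (h u' u huu'.ge)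
  intro u u' huu' i hi
  by_contra hi'
  have hone : (1 : K) ∈ cubeSubmodule O R hR c Set.univ := fun j => by simpa using (hc j).1
  have hmem := huu' (cubeSubmodule_mono (fun j => hc_mem j j)
    (Set.inter_subset_right.trans (Set.singleton_subset_iff.2 hi))
    (mul_mem_cubeSubmodule_inter_singleton hc hone i)) i
  rw [Set.mulIndicator_of_notMem hi', one_mul, mul_one, valuation_prod_erase_eq_one hc] at hmem
  exact lt_irrefl _ hmem

end Cube

/-- If `R` is the intersection of `n ≥ 1` pairwise incomparable valuation subrings of a
field `K`, then the lattice of `R`-submodules of `K` has reduced rank exactly `n`: it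
contains a strict `n`-cube but no strict `(n+1)`-cube. -/
theorem reducedRank_submodules_of_multiValuationRing
    {K : Type*} [Field K] (n : ℕ) (hn : 1 ≤ n)
    (O : Fin n → ValuationSubring K)
    (hinc : ∀ i j : Fin n, i ≠ j → ¬((O i : Set K) ⊆ (O j : Set K)))
    (R : Subring K) (hR : (R : Set K) = ⋂ i, (O i : Set K)) :
    (∃ f : Set (Fin n) → Submodule R K, IsStrictCube f) ∧
    ¬(∃ f : Set (Fin (n + 1)) → Submodule R K, IsStrictCube f) := by
  have hinc' : Pairwise fun i j => ¬O i ≤ O j := fun i j hij => hinc i j hij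
  have : Nonempty (Fin n) := ⟨⟨0, hn⟩⟩
  obtain ⟨c, hc⟩ := exists_valuation_lt_one_eq_one O hinc'
  refine ⟨⟨cubeSubmodule O R hR c, cubeSubmodule_injective hc, cubeSubmodule_union hinc' hc,
    cubeSubmodule_inter fun j => mem_of_valuation_lt_one_eq_one hc j j⟩, ?_⟩
  rintro ⟨f, hf⟩
  exact not_isStrictCube_of_card_lt O R hinc' hR (by simp) f hf
end

section
/- Let C be an abelian category, and for an object A let rk₀(A) ∈ ℕ ∪ {∞} denote the reduced rank of the subobject lattice Sub(A). Then: (1) if there is an epimorphism A → B, then rk₀(A) ≥ rk₀(B); (2) if there is a monomorphism A → B, then rk₀(A) ≤ rk₀(B); (3) if 0 → A → B → C → 0 is a short exact sequence, then rk₀(B) ≤ rk₀(A) + rk₀(C), and equality holds if the sequence splits; (4) rk₀(A) = 0 if and only if A is a zero object. -/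
open CategoryTheory

/-- The reduced rank of a lattice: the supremum of the sizes of strict cubes in it. -/
noncomputable def reducedRank (M : Type*) [Lattice M] : ℕ∞ :=
  ⨆ (n : ℕ) (_ : ∃ f : Set (Fin n) → M, IsStrictCube f), (n : ℕ∞)

/-!
The subobject lattices of an abelian category are modular. A monomorphism `A ⟶ B` identifies
`Sub A` with an interval `Iic` of `Sub B`, and, through the duality `Sub X ≃o (Sub Xᵒᵖ)ᵒᵈ`, an
epimorphism `B ⟶ D` identifies `Sub D` with an interval `Ici` of `Sub B`; so everything reduces
to lattice theory, where the reduced rank is invariant under order isomorphisms and order duality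
and grows along injective lattice homomorphisms.

The heart of subadditivity is `rk M ≤ rk (Iic a) + rk (Ici a)` in a modular lattice `M`. Given a
strict cube `f` with bottom `b` and top `T`, put `m = (a ⊓ T) ⊔ b` and pick `U` maximal with
`m ⊓ f U = b`. Then `s ↦ m ⊔ f s` (`s ⊆ U`) is a cube in `[m, T]`, while the atoms
`m ⊓ f (U ∪ {i})`, `i ∉ U`, are independent over `b` and span a cube in `[b, m]`; the diamond
isomorphisms carry `[b, m]` into `Iic a` and `[m, T]` into `Ici a`. In the split case `Sub X₁` and
`Sub X₃` are the `Iic` of two disjoint subobjects of `X₂`, and joining a cube of each gives a cube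
of the summed dimension.
-/
section Lattice

open Set Function

variable {M N : Type*} [Lattice M] [Lattice N]

theorem isStrictCube_const_fin_zero (x : M) : IsStrictCube fun _ : Set (Fin 0) => x :=
  ⟨fun _ _ _ => Subsingleton.elim _ _, fun _ _ => (sup_idem x).symm, fun _ _ => (inf_idem x).symm⟩

theorem LatticeHom.isStrictCube {n : ℕ} (φ : LatticeHom (Set (Fin n)) M) (hφ : Injective φ) :
    IsStrictCube φ :=
  ⟨hφ, map_sup φ, map_inf φ⟩

theorem natCard_le_reducedRank {ι : Type*} [Finite ι] (φ : LatticeHom (Set ι) M)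
    (hφ : Injective φ) : (Nat.card ι : ℕ∞) ≤ reducedRank M :=
  let e : Set (Fin (Nat.card ι)) ≃o Set ι := (Finite.equivFin ι).symm.toOrderIsoSet
  le_iSup₂ (f := fun n (_ : ∃ f : Set (Fin n) → M, IsStrictCube f) => (n : ℕ∞)) _
    ⟨_, (φ.comp e).isStrictCube (hφ.comp e.injective)⟩

theorem reducedRank_le {c : ℕ∞}
    (h : ∀ n (φ : LatticeHom (Set (Fin n)) M), Injective φ → (n : ℕ∞) ≤ c) :
    reducedRank M ≤ c :=
  iSup₂_le fun n ⟨f, hinj, hsup, hinf⟩ => h n ⟨⟨f, hsup⟩, hinf⟩ hinj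

theorem reducedRank_add_reducedRank_le [Nonempty M] [Nonempty N] {c : ℕ∞}
    (h : ∀ p q (φ : LatticeHom (Set (Fin p)) M) (ψ : LatticeHom (Set (Fin q)) N),
      Injective φ → Injective ψ → (p + q : ℕ∞) ≤ c) :
    reducedRank M + reducedRank N ≤ c :=
  ENat.biSup_add_biSup_le' ⟨0, _, isStrictCube_const_fin_zero (Classical.arbitrary M)⟩
    ⟨0, _, isStrictCube_const_fin_zero (Classical.arbitrary N)⟩
    fun p ⟨φ, hφ, hφsup, hφinf⟩ q ⟨ψ, hψ, hψsup, hψinf⟩ =>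
      h p q ⟨⟨φ, hφsup⟩, hφinf⟩ ⟨⟨ψ, hψsup⟩, hψinf⟩ hφ hψ

theorem reducedRank_le_of_injective (φ : LatticeHom M N) (hφ : Injective φ) :
    reducedRank M ≤ reducedRank N :=
  reducedRank_le fun n ψ hψ => by simpa using natCard_le_reducedRank (φ.comp ψ) (hφ.comp hψ)

theorem OrderIso.reducedRank_eq (e : M ≃o N) : reducedRank M = reducedRank N :=
  (reducedRank_le_of_injective e e.injective).antisymm
    (reducedRank_le_of_injective e.symm e.symm.injective)

theorem reducedRank_orderDual : reducedRank Mᵒᵈ = reducedRank M := by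
  suffices h : ∀ (L : Type _) [Lattice L], reducedRank Lᵒᵈ ≤ reducedRank L from
    (h M).antisymm (h Mᵒᵈ)
  intro L _
  refine reducedRank_le fun n φ hφ => ?_
  let c : (Set (Fin n))ᵒᵈ ≃o Set (Fin n) := (OrderIso.compl (Set (Fin n))).symm
  let ψ : LatticeHom (Set (Fin n)) L := LatticeHom.dual.symm (φ.comp (c : LatticeHom _ _))
  simpa using natCard_le_reducedRank ψ (hφ.comp c.injective)

theorem one_le_reducedRank_of_lt {u v : M} (huv : u < v) : 1 ≤ reducedRank M := by
  classical
  let φ : LatticeHom (Set Unit) M :=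
    { toFun := fun s => if () ∈ s then v else u
      map_sup' := fun s t => by
        by_cases hs : () ∈ s <;> by_cases ht : () ∈ t <;> simp [hs, ht, huv.le]
      map_inf' := fun s t => by
        by_cases hs : () ∈ s <;> by_cases ht : () ∈ t <;> simp [hs, ht, huv.le] }
  have hφ : Injective φ := fun s t hst => by
    by_cases hs : () ∈ s <;> by_cases ht : () ∈ t <;>
      simp_all [φ, huv.ne, huv.ne', Set.ext_iff]
  simpa using natCard_le_reducedRank φ hφ

theorem reducedRank_eq_zero_iff : reducedRank M = 0 ↔ Subsingleton M := by
  refine ⟨fun h => ?_, fun _ => nonpos_iff_eq_zero.1 (reducedRank_le fun n φ hφ => ?_)⟩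
  · by_contra hM
    obtain ⟨x, y, hxy⟩ := not_subsingleton_iff_nontrivial.1 hM
    have := one_le_reducedRank_of_lt (inf_lt_sup.2 hxy)
    simp [h] at this
  · rcases n with _ | n
    · exact le_rfl
    · exact (univ_eq_empty_iff.1 (hφ (Subsingleton.elim _ _))).elim 0

theorem inf_map_insert_inf_map_union {ι : Type*} (f : LatticeHom (Set ι) M) {m : M}
    {U S : Set ι} {i : ι} (hU : m ⊓ f U = f ∅) (hi : i ∉ U ∪ S) :
    m ⊓ f (insert i U) ⊓ (m ⊓ f (U ∪ S)) = f ∅ := by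
  rw [← inf_inf_distrib_left, ← map_inf]
  change m ⊓ f (insert i U ∩ (U ∪ S)) = f ∅
  rw [insert_inter_of_notMem hi, inter_eq_left.2 subset_union_left, hU]

section Intervals

variable {x y x' y' z : M}

theorem natCard_le_reducedRank_Icc {ι : Type*} [Finite ι] (φ : LatticeHom (Set ι) M)
    (hφ : Injective φ) : (Nat.card ι : ℕ∞) ≤ reducedRank (Icc (φ ∅) (φ univ)) :=
  natCard_le_reducedRank
    { toFun := fun s => ⟨φ s, OrderHomClass.mono φ (empty_subset s),
        OrderHomClass.mono φ (subset_univ s)⟩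
      map_sup' := fun s t => Subtype.ext (map_sup φ s t)
      map_inf' := fun s t => Subtype.ext (map_inf φ s t) }
    fun _ _ h => hφ (congrArg Subtype.val h)

theorem reducedRank_Icc_mono (hx : x' ≤ x) (hy : y ≤ y') :
    reducedRank (Icc x y) ≤ reducedRank (Icc x' y') :=
  reducedRank_le_of_injective
    { toFun := inclusion (Icc_subset_Icc hx hy), map_sup' := fun _ _ => rfl,
      map_inf' := fun _ _ => rfl }
    (inclusion_injective (Icc_subset_Icc hx hy))

theorem reducedRank_Icc_le_Iic (hy : y ≤ z) : reducedRank (Icc x y) ≤ reducedRank (Iic z) :=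
  reducedRank_le_of_injective
    { toFun := inclusion fun _ h => h.2.trans hy, map_sup' := fun _ _ => rfl,
      map_inf' := fun _ _ => rfl }
    (inclusion_injective fun _ h => h.2.trans hy)

theorem reducedRank_Icc_le_Ici (hx : z ≤ x) : reducedRank (Icc x y) ≤ reducedRank (Ici z) :=
  reducedRank_le_of_injective
    { toFun := inclusion fun _ h => hx.trans h.1, map_sup' := fun _ _ => rfl,
      map_inf' := fun _ _ => rfl }
    (inclusion_injective fun _ h => hx.trans h.1)

theorem reducedRank_Iic_le (z : M) : reducedRank (Iic z) ≤ reducedRank M :=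
  reducedRank_le_of_injective
    { toFun := Subtype.val, map_sup' := fun _ _ => rfl, map_inf' := fun _ _ => rfl }
    Subtype.val_injective

theorem reducedRank_Ici_toDual (y : M) :
    reducedRank (Ici (OrderDual.toDual y)) = reducedRank (Iic y) :=
  let e : Ici (OrderDual.toDual y) ≃o (Iic y)ᵒᵈ :=
    { toFun := fun x => OrderDual.toDual ⟨OrderDual.ofDual x.1, x.2⟩
      invFun := fun x => ⟨OrderDual.toDual (OrderDual.ofDual x).1, (OrderDual.ofDual x).2⟩
      left_inv := fun _ => rfl
      right_inv := fun _ => rfl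
      map_rel_iff' := Iff.rfl }
  e.reducedRank_eq.trans reducedRank_orderDual

end Intervals

section SupIndep

variable {α ι : Type*} [Lattice α] [OrderBot α] [IsModularLattice α] {d : ι → α}

theorem Finset.SupIndep.sup_inf_sup [DecidableEq ι] {u s t : Finset ι} (hu : u.SupIndep d)
    (hs : s ⊆ u) (ht : t ⊆ u) : s.sup d ⊓ t.sup d = (s ∩ t).sup d := by
  have hdisj : Disjoint ((s \ t).sup d) (t.sup d) :=
    hu.disjoint_sup_sup (Finset.sdiff_subset.trans hs) ht Finset.sdiff_disjoint
  conv_lhs => rw [← Finset.sdiff_union_inter s t, Finset.sup_union, sup_comm]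
  rw [sup_inf_assoc_of_le _ (Finset.sup_mono Finset.inter_subset_right), hdisj.eq_bot,
    sup_bot_eq]

def Finset.SupIndep.supLatticeHom [Fintype ι] [DecidableEq ι]
    (hd : (Finset.univ : Finset ι).SupIndep d) : LatticeHom (Finset ι) α where
  toFun s := s.sup d
  map_sup' _ _ := Finset.sup_union
  map_inf' s t := (hd.sup_inf_sup (Finset.subset_univ s) (Finset.subset_univ t)).symm

theorem Finset.SupIndep.supLatticeHom_injective [Fintype ι] [DecidableEq ι]
    (hd : (Finset.univ : Finset ι).SupIndep d) (hne : ∀ i, d i ≠ ⊥) :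
    Injective hd.supLatticeHom := fun s t hst => by
  ext i
  have key : ∀ s : Finset ι, i ∈ s ↔ d i ≤ hd.supLatticeHom s := fun s =>
    (hd.le_sup_iff (Finset.subset_univ s) (Finset.mem_univ i) hne).symm
  rw [key, key, hst]

end SupIndep

section Modular

variable [IsModularLattice M]

section Cube

variable {ι : Type*} [Finite ι]

theorem natCard_le_reducedRank_Icc_sup {f : LatticeHom (Set ι) M} (hf : Injective f) {m : M}
    {U : Set ι} (hU : m ⊓ f U = f ∅) : (Nat.card U : ℕ∞) ≤ reducedRank (Icc m (m ⊔ f U)) := by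
  let restrict : LatticeHom (Set U) (Set ι) :=
    { toFun := (Subtype.val '' ·)
      map_sup' := image_union _
      map_inf' := fun _ _ => image_inter Subtype.val_injective }
  have hrestrict : Injective restrict := image_injective.2 Subtype.val_injective
  calc (Nat.card U : ℕ∞)
      ≤ reducedRank (Icc (f ∅) (f U)) := by
        have := natCard_le_reducedRank_Icc (f.comp restrict) (hf.comp hrestrict)
        rwa [LatticeHom.comp_apply, LatticeHom.comp_apply,
          show restrict ∅ = ∅ from image_empty _,
          show restrict univ = U from Subtype.coe_image_univ U] at this
    _ = reducedRank (Icc (m ⊓ f U) (f U)) := by rw [hU]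
    _ = reducedRank (Icc m (m ⊔ f U)) := (infIccOrderIsoIccSup' m (f U)).reducedRank_eq

theorem natCard_compl_le_reducedRank_Icc (f : LatticeHom (Set ι) M) {m : M} {U : Set ι}
    (hU : Maximal (fun V => m ⊓ f V = f ∅) U) :
    (Nat.card ↥Uᶜ : ℕ∞) ≤ reducedRank (Icc (f ∅) m) := by
  classical
  have := Fintype.ofFinite ↥Uᶜ
  have hbm : f ∅ ≤ m := hU.1 ▸ inf_le_left
  -- the atoms live in `Ici (f ∅)`, whose bottom `f ∅` serves as the empty join
  let d : ↥Uᶜ → Ici (f ∅) := fun i =>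
    ⟨m ⊓ f (insert i.1 U), le_inf hbm (OrderHomClass.mono f (empty_subset _))⟩
  have hsup_le (t : Finset ↥Uᶜ) :
      ((t.sup d : Ici (f ∅)) : M) ≤ m ⊓ f (U ∪ Subtype.val '' (t : Set ↥Uᶜ)) := by
    have hmem : m ⊓ f (U ∪ Subtype.val '' (t : Set ↥Uᶜ)) ∈ Ici (f ∅) :=
      le_inf hbm (OrderHomClass.mono f (empty_subset _))
    exact Finset.sup_le (f := d) (a := ⟨_, hmem⟩) fun j hj => inf_le_inf_left m
      (OrderHomClass.mono f (insert_subset (Or.inr ⟨j, hj, rfl⟩) subset_union_left))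
  have hd : (Finset.univ : Finset ↥Uᶜ).SupIndep d := by
    intro t _ i _ hit
    have hi : i.1 ∉ U ∪ Subtype.val '' (t : Set ↥Uᶜ) := by
      rintro (hiU | ⟨j, hj, hji⟩)
      · exact i.2 hiU
      · exact hit (Subtype.ext hji ▸ hj)
    rw [disjoint_iff_inf_le]
    exact (inf_le_inf_left _ (hsup_le t)).trans (inf_map_insert_inf_map_union f hU.1 hi).le
  have hne (i : ↥Uᶜ) : d i ≠ ⊥ := fun hi =>
    i.2 (hU.2 (congrArg Subtype.val hi) (subset_insert _ _) (mem_insert _ _))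
  let e : Set ↥Uᶜ ≃o Finset ↥Uᶜ := Fintype.finsetOrderIsoSet.symm
  let ψ : LatticeHom (Set ↥Uᶜ) M :=
    LatticeHom.comp
      { toFun := Subtype.val, map_sup' := fun _ _ => rfl, map_inf' := fun _ _ => rfl }
      (hd.supLatticeHom.comp e)
  have hψ : Injective ψ :=
    Subtype.val_injective.comp ((hd.supLatticeHom_injective hne).comp e.injective)
  calc (Nat.card ↥Uᶜ : ℕ∞)
      ≤ reducedRank (Icc (ψ ∅) (ψ univ)) := natCard_le_reducedRank_Icc ψ hψ
    _ ≤ reducedRank (Icc (f ∅) m) :=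
      reducedRank_Icc_mono (Subtype.prop _) ((hsup_le _).trans inf_le_left)

end Cube

theorem reducedRank_le_reducedRank_Iic_add_reducedRank_Ici (a : M) :
    reducedRank M ≤ reducedRank (Iic a) + reducedRank (Ici a) := by
  classical
  refine reducedRank_le fun n f hf => ?_
  set b := f ∅
  set T := f univ
  set m := a ⊓ T ⊔ b
  have hbT : b ≤ T := OrderHomClass.mono f (empty_subset _)
  obtain ⟨U, -, hU⟩ := Finite.exists_le_maximal (p := fun V => m ⊓ f V = b) (a := ∅)
    (inf_eq_right.2 le_sup_right)
  have hlower : (Nat.card ↥Uᶜ : ℕ∞) ≤ reducedRank (Iic a) :=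
    calc (Nat.card ↥Uᶜ : ℕ∞) ≤ reducedRank (Icc b (a ⊓ T ⊔ b)) :=
          natCard_compl_le_reducedRank_Icc f hU
      _ = reducedRank (Icc (a ⊓ T ⊓ b) (a ⊓ T)) :=
          (infIccOrderIsoIccSup _ _).reducedRank_eq.symm
      _ ≤ reducedRank (Iic a) := reducedRank_Icc_le_Iic inf_le_left
  have hupper : (Nat.card U : ℕ∞) ≤ reducedRank (Ici a) :=
    calc (Nat.card U : ℕ∞) ≤ reducedRank (Icc m (m ⊔ f U)) :=
          natCard_le_reducedRank_Icc_sup hf hU.1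
      _ ≤ reducedRank (Icc (T ⊓ a) T) :=
          reducedRank_Icc_mono (inf_comm T a ▸ le_sup_left)
            (sup_le (sup_le inf_le_right hbT) (OrderHomClass.mono f (subset_univ _)))
      _ = reducedRank (Icc a (T ⊔ a)) := (infIccOrderIsoIccSup T a).reducedRank_eq
      _ ≤ reducedRank (Ici a) := reducedRank_Icc_le_Ici le_rfl
  have hcard : Nat.card ↥Uᶜ + Nat.card U = n := by
    rw [add_comm, ← Nat.card_sum, Nat.card_congr (Equiv.Set.sumCompl U), Nat.card_eq_fintype_card,
      Fintype.card_fin]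
  calc (n : ℕ∞) = Nat.card ↥Uᶜ + Nat.card U := by exact_mod_cast hcard.symm
    _ ≤ reducedRank (Iic a) + reducedRank (Ici a) := add_le_add hlower hupper

section Disjoint

variable [OrderBot M] {a c u u' v v' : M}

theorem Disjoint.sup_inf_eq_left (hac : Disjoint a c) (hu : u ≤ a) (hv : v ≤ c) :
    (u ⊔ v) ⊓ a = u := by
  rw [sup_inf_assoc_of_le v hu, (hac.symm.mono_left hv).eq_bot, sup_bot_eq]

theorem Disjoint.sup_inf_eq_right (hac : Disjoint a c) (hu : u ≤ a) (hv : v ≤ c) :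
    (u ⊔ v) ⊓ c = v := by
  rw [sup_comm]
  exact hac.symm.sup_inf_eq_left hv hu

theorem Disjoint.inf_sup_eq_inf (hac : Disjoint a c) (hu : u ≤ a) (hu' : u' ≤ a) :
    u ⊓ (u' ⊔ c) = u ⊓ u' :=
  calc u ⊓ (u' ⊔ c) = u ⊓ a ⊓ (u' ⊔ c) := by rw [inf_eq_left.2 hu]
    _ = u ⊓ ((u' ⊔ c) ⊓ a) := by rw [inf_assoc, inf_comm a]
    _ = u ⊓ u' := by rw [hac.sup_inf_eq_left hu' le_rfl]

theorem Disjoint.sup_inf_sup_le (hac : Disjoint a c) (hu : u ≤ a) (hu' : u' ≤ a) (hv : v ≤ c)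
    (hv' : v' ≤ c) : (u ⊔ v) ⊓ (u' ⊔ v') ≤ u ⊓ u' ⊔ v :=
  calc (u ⊔ v) ⊓ (u' ⊔ v') ≤ (v ⊔ u) ⊓ (u' ⊔ c) :=
        inf_le_inf (sup_comm u v).le (sup_le_sup_left hv' _)
    _ = v ⊔ u ⊓ u' := by
        rw [sup_inf_assoc_of_le u (hv.trans le_sup_right), hac.inf_sup_eq_inf hu hu']
    _ = u ⊓ u' ⊔ v := sup_comm _ _

theorem Disjoint.sup_inf_sup (hac : Disjoint a c) (hu : u ≤ a) (hu' : u' ≤ a) (hv : v ≤ c)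
    (hv' : v' ≤ c) : (u ⊔ v) ⊓ (u' ⊔ v') = u ⊓ u' ⊔ v ⊓ v' := by
  refine le_antisymm ?_ (sup_le (inf_le_inf le_sup_left le_sup_left)
    (inf_le_inf le_sup_right le_sup_right))
  have h₁ := hac.sup_inf_sup_le hu hu' hv hv'
  have h₂ : (u ⊔ v) ⊓ (u' ⊔ v') ≤ u ⊔ v ⊓ v' := by
    simpa only [sup_comm] using hac.symm.sup_inf_sup_le hv hv' hu hu'
  calc (u ⊔ v) ⊓ (u' ⊔ v') ≤ (u ⊔ v ⊓ v') ⊓ (u ⊓ u' ⊔ v) := le_inf h₂ h₁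
    _ ≤ u ⊓ (u ⊓ u') ⊔ v ⊓ v' :=
        hac.sup_inf_sup_le hu (inf_le_left.trans hu) (inf_le_left.trans hv) hv
    _ = u ⊓ u' ⊔ v ⊓ v' := by rw [← inf_assoc, inf_idem]

theorem reducedRank_Iic_add_reducedRank_Iic_le (hac : Disjoint a c) :
    reducedRank (Iic a) + reducedRank (Iic c) ≤ reducedRank M := by
  refine reducedRank_add_reducedRank_le fun p q φ ψ hφ hψ => ?_
  let χ : LatticeHom (Set (Fin p ⊕ Fin q)) M :=
    { toFun := fun s => (φ (Sum.inl ⁻¹' s) : M) ⊔ ψ (Sum.inr ⁻¹' s)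
      map_sup' := fun s t => by
        change (φ (Sum.inl ⁻¹' s ⊔ Sum.inl ⁻¹' t) : M) ⊔
          ψ (Sum.inr ⁻¹' s ⊔ Sum.inr ⁻¹' t) = _
        rw [map_sup, map_sup, Iic.coe_sup, Iic.coe_sup, sup_sup_sup_comm]
      map_inf' := fun s t => by
        change (φ (Sum.inl ⁻¹' s ⊓ Sum.inl ⁻¹' t) : M) ⊔
          ψ (Sum.inr ⁻¹' s ⊓ Sum.inr ⁻¹' t) = _
        rw [map_inf, map_inf, Iic.coe_inf, Iic.coe_inf]
        exact (hac.sup_inf_sup (φ _).2 (φ _).2 (ψ _).2 (ψ _).2).symm }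
  have hχ : Injective χ := by
    intro s t hst
    change (φ (Sum.inl ⁻¹' s) : M) ⊔ ψ (Sum.inr ⁻¹' s) =
      (φ (Sum.inl ⁻¹' t) : M) ⊔ ψ (Sum.inr ⁻¹' t) at hst
    have hl := congrArg (· ⊓ a) hst
    have hr := congrArg (· ⊓ c) hst
    simp only [hac.sup_inf_eq_left (φ _).2 (ψ _).2, hac.sup_inf_eq_right (φ _).2 (ψ _).2] at hl hr
    ext (x | x)
    · exact Set.ext_iff.1 (hφ (Subtype.ext hl)) x
    · exact Set.ext_iff.1 (hψ (Subtype.ext hr)) x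
  simpa using natCard_le_reducedRank χ hχ

end Disjoint

end Modular

end Lattice

namespace CategoryTheory

open Limits Opposite Set

variable {C : Type*} [Category C]

noncomputable def Subobject.orderIsoIicMk {A B : C} (f : A ⟶ B) [Mono f] :
    Subobject A ≃o Iic (Subobject.mk f) :=
  (Subobject.mapIsoToOrderIso (Subobject.underlyingIso f).symm).trans
    (Subobject.subobjectOrderIso _)

variable [Abelian C]

namespace Subobject

theorem factors_of_epi_comp {X T T' : C} {P : Subobject X} (e : T' ⟶ T) [Epi e] {g : T ⟶ X}
    (h : P.Factors (e ≫ g)) : P.Factors g := by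
  have hg : g ≫ cokernel.π P.arrow = 0 := (cancel_epi e).1 <| by
    rw [comp_zero, ← Category.assoc, ← P.factorThru_arrow _ h, Category.assoc, cokernel.condition,
      comp_zero]
  rw [← Abelian.monoLift_comp P.arrow g hg]
  exact factors_comp_arrow _

theorem sup_eq_imageSubobject {X : C} (x y : Subobject X) :
    x ⊔ y = imageSubobject (biprod.desc x.arrow y.arrow) := by
  refine le_antisymm (sup_le ?_ ?_) (imageSubobject_le _
    (biprod.desc (ofLE x _ le_sup_left) (ofLE y _ le_sup_right)) (by ext <;> simp))
  · exact le_of_factors <| by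
      simpa using imageSubobject_factors_comp_self (biprod.desc x.arrow y.arrow) biprod.inl
  · exact le_of_factors <| by
      simpa using imageSubobject_factors_comp_self (biprod.desc x.arrow y.arrow) biprod.inr

theorem exists_epi_comp_eq_add {X T : C} {x y : Subobject X} {g : T ⟶ X}
    (h : (x ⊔ y).Factors g) : ∃ (T' : C) (e : T' ⟶ T) (_ : Epi e) (u v : T' ⟶ X),
      x.Factors u ∧ y.Factors v ∧ e ≫ g = u + v := by
  rw [sup_eq_imageSubobject] at h
  set c := biprod.desc x.arrow y.arrow
  let κ := (imageSubobject c).factorThru g h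
  refine ⟨Limits.pullback (factorThruImageSubobject c) κ, pullback.snd _ _, inferInstance,
    pullback.fst _ _ ≫ biprod.fst ≫ x.arrow, pullback.fst _ _ ≫ biprod.snd ≫ y.arrow,
    factors_of_factors_right _ (factors_comp_arrow _),
    factors_of_factors_right _ (factors_comp_arrow _), ?_⟩
  rw [← factorThru_arrow _ g h, ← Category.assoc, ← pullback.condition, Category.assoc,
    imageSubobject_arrow_comp, ← Preadditive.comp_add, ← biprod.desc_eq]

instance isModularLattice (X : C) : IsModularLattice (Subobject X) where
  sup_inf_le_assoc_of_le {x} y {z} hxz := by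
    apply le_of_factors
    obtain ⟨T', e, _, u, v, hu, hv, huv⟩ := exists_epi_comp_eq_add
      (factors_of_le _ _root_.inf_le_left (factors_self ((x ⊔ y) ⊓ z)))
    refine factors_of_epi_comp e (huv ▸ factors_add _ _ (sup_factors_of_factors_left hu) ?_)
    refine sup_factors_of_factors_right ((inf_factors _).2 ⟨hv, ?_⟩)
    -- `v = e ≫ w - u` lies in `z` because both `w` and `u` do
    refine factors_right_of_factors_add u v (huv ▸ ?_) (factors_of_le _ hxz hu)
    exact factors_of_factors_right _ (factors_of_le _ _root_.inf_le_right (factors_self _))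

theorem reducedRank_op (X : C) : reducedRank (Subobject (op X)) = reducedRank (Subobject X) := by
  rw [(Abelian.subobjectIsoSubobjectOp X).reducedRank_eq, reducedRank_orderDual]

theorem reducedRank_le_of_mono {A B : C} (f : A ⟶ B) [Mono f] :
    reducedRank (Subobject A) ≤ reducedRank (Subobject B) := by
  rw [(orderIsoIicMk f).reducedRank_eq]
  exact reducedRank_Iic_le _

theorem reducedRank_le_of_epi {A B : C} (f : A ⟶ B) [Epi f] :
    reducedRank (Subobject B) ≤ reducedRank (Subobject A) := by
  rw [← reducedRank_op A, ← reducedRank_op B]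
  exact reducedRank_le_of_mono f.op

theorem reducedRank_eq_zero_iff_isZero (A : C) :
    reducedRank (Subobject A) = 0 ↔ IsZero A :=
  reducedRank_eq_zero_iff.trans ⟨fun h => by_contra fun hA =>
    not_nontrivial_iff_subsingleton.2 h (nontrivial_of_not_isZero hA), subsingleton_of_isZero⟩

end Subobject

namespace ShortComplex

variable {S : ShortComplex C}

theorem ShortExact.subobjectIsoSubobjectOp_mk_f (hS : S.ShortExact) [Mono S.f] [Epi S.g] :
    Abelian.subobjectIsoSubobjectOp S.X₂ (Subobject.mk S.f) =
      OrderDual.toDual (Subobject.mk S.g.op) := by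
  let i := IsColimit.coconePointUniqueUpToIso (cokernelIsCokernel S.f) hS.gIsCokernel
  have hi : cokernel.π S.f ≫ i.hom = S.g :=
    IsColimit.comp_coconePointUniqueUpToIso_hom (cokernelIsCokernel S.f) hS.gIsCokernel
      WalkingParallelPair.one
  rw [Abelian.subobjectIsoSubobjectOp_apply]
  refine (Subobject.lift_mk _ S.f).trans (congrArg OrderDual.toDual ?_)
  refine Subobject.mk_eq_mk_of_comm _ _ i.symm.op (Quiver.Hom.unop_inj ?_)
  simp [← hi]

theorem ShortExact.reducedRank_Ici_mk_f (hS : S.ShortExact) [Mono S.f] [Epi S.g] :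
    reducedRank (Ici (Subobject.mk S.f)) = reducedRank (Subobject S.X₃) := by
  rw [((Abelian.subobjectIsoSubobjectOp S.X₂).Ici _).reducedRank_eq,
    hS.subobjectIsoSubobjectOp_mk_f, reducedRank_Ici_toDual,
    ← (Subobject.orderIsoIicMk S.g.op).reducedRank_eq, Subobject.reducedRank_op]

theorem ShortExact.reducedRank_le_add (hS : S.ShortExact) :
    reducedRank (Subobject S.X₂) ≤ reducedRank (Subobject S.X₁) + reducedRank (Subobject S.X₃) := by
  have := hS.mono_f
  have := hS.epi_g
  calc reducedRank (Subobject S.X₂)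
      ≤ reducedRank (Iic (Subobject.mk S.f)) + reducedRank (Ici (Subobject.mk S.f)) :=
        reducedRank_le_reducedRank_Iic_add_reducedRank_Ici _
    _ = reducedRank (Subobject S.X₁) + reducedRank (Subobject S.X₃) := by
        rw [← (Subobject.orderIsoIicMk S.f).reducedRank_eq, hS.reducedRank_Ici_mk_f]

theorem Splitting.disjoint_mk_f_mk_s (spl : S.Splitting) [Mono S.f] [Mono spl.s] :
    Disjoint (Subobject.mk S.f) (Subobject.mk spl.s) := by
  rw [disjoint_iff, ← le_bot_iff]
  refine Subobject.le_of_factors ((Subobject.bot_factors_iff_zero _).2 ?_)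
  let w := Subobject.mk S.f ⊓ Subobject.mk spl.s
  obtain ⟨u, hu⟩ : ∃ u : (w : C) ⟶ S.X₁, u ≫ S.f = w.arrow :=
    (Subobject.mk_factors_iff S.f _).1 (Subobject.inf_arrow_factors_left _ _)
  obtain ⟨v, hv⟩ : ∃ v : (w : C) ⟶ S.X₃, v ≫ spl.s = w.arrow :=
    (Subobject.mk_factors_iff spl.s _).1 (Subobject.inf_arrow_factors_right _ _)
  have hv0 : v = 0 :=
    calc v = (v ≫ spl.s) ≫ S.g := by rw [Category.assoc, spl.s_g, Category.comp_id]
      _ = u ≫ S.f ≫ S.g := by rw [hv, ← hu, Category.assoc]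
      _ = 0 := by rw [S.zero, comp_zero]
  rw [← hv, hv0, zero_comp]

theorem ShortExact.reducedRank_eq_add_of_splitting (hS : S.ShortExact) (spl : S.Splitting) :
    reducedRank (Subobject S.X₂) = reducedRank (Subobject S.X₁) + reducedRank (Subobject S.X₃) := by
  have := hS.mono_f
  have : IsSplitMono spl.s := IsSplitMono.mk' ⟨S.g, spl.s_g⟩
  refine hS.reducedRank_le_add.antisymm ?_
  rw [(Subobject.orderIsoIicMk S.f).reducedRank_eq, (Subobject.orderIsoIicMk spl.s).reducedRank_eq]
  exact reducedRank_Iic_add_reducedRank_Iic_le spl.disjoint_mk_f_mk_s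

end ShortComplex

end CategoryTheory

/-- Basic properties of the reduced rank of objects of an abelian category
(the reduced rank of an object being that of its subobject lattice):
monotonicity under epimorphisms and monomorphisms, subadditivity in short exact
sequences with equality in the split case, and vanishing exactly on zero objects. -/
theorem reducedRank_subobject_properties {C : Type*} [Category C] [Abelian C] :
    (∀ (A B : C) (f : A ⟶ B), Epi f →
      reducedRank (Subobject B) ≤ reducedRank (Subobject A)) ∧
    (∀ (A B : C) (f : A ⟶ B), Mono f →
      reducedRank (Subobject A) ≤ reducedRank (Subobject B)) ∧
    (∀ S : ShortComplex C, S.ShortExact →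
      reducedRank (Subobject S.X₂) ≤
        reducedRank (Subobject S.X₁) + reducedRank (Subobject S.X₃)) ∧
    (∀ S : ShortComplex C, S.ShortExact → Nonempty S.Splitting →
      reducedRank (Subobject S.X₂) =
        reducedRank (Subobject S.X₁) + reducedRank (Subobject S.X₃)) ∧
    (∀ A : C, reducedRank (Subobject A) = 0 ↔ Limits.IsZero A) :=
  ⟨fun _ _ f _ => Subobject.reducedRank_le_of_epi f,
    fun _ _ f _ => Subobject.reducedRank_le_of_mono f,
    fun _ hS => hS.reducedRank_le_add,
    fun _ hS ⟨spl⟩ => hS.reducedRank_eq_add_of_splitting spl,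
    Subobject.reducedRank_eq_zero_iff_isZero⟩
end

section
/- Let (M, ∨, ∧, ⊥) be a modular lattice with least element ⊥. Suppose there is no infinite independent sequence in M, i.e., there is no sequence a_1, a_2, a_3, … of elements strictly above ⊥ such that (a_1 ∨ ⋯ ∨ a_{k−1}) ∧ a_k = ⊥ for every k ≥ 2. Then: (a) for every a > ⊥ there exists a quasi-atom q with q ≤ a; and (b) there is a finite bound on the lengths of finite independent sequences in M. -/
/-!
Call `x ≤ u` essential in `u` if every nonzero `w ≤ u` meets `x`. If no quasi-atom lay below
`a > ⊥`, there would be an infinite chain `a = c₀ ≥ c₁ ≥ ⋯` of nonzero elements with each `cₙ₊₁`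
inessential in `cₙ`, and nonzero pieces `xₙ ≤ cₙ` missing `cₙ₊₁` form an infinite independent
sequence. Dually, an infinite increasing chain of inessential extensions yields one, so there is
an independent finite set `s` of quasi-atoms whose join cannot be inessentially extended; it meets
every nonzero element, since otherwise a quasi-atom below a nonzero element missing it would do.

By modularity, joins of essential elements of independent elements are essential in their join;
as a nonzero `q ⊓ b` is essential in a quasi-atom `q`, an element meeting every member of `s`
meets every nonzero element. So if `T` is independent and `x ∈ T \ s`, some `q ∈ s` misses the
join of `T \ {x}`, and exchanging `x` for `q` keeps `T` independent; iterating gives `#T ≤ #s`.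
-/

/-- A quasi-atom in a lower-bounded lattice: an element `q > ⊥` such that the
interval `(⊥, q]` is closed under meets. -/
def IsQuasiAtom {M : Type*} [Lattice M] [OrderBot M] (q : M) : Prop :=
  ⊥ < q ∧ ∀ x y : M, ⊥ < x → x ≤ q → ⊥ < y → y ≤ q → ⊥ < x ⊓ y

open Finset

section

variable {α : Type*} [Lattice α] [OrderBot α]

def IsEssentialIn (x u : α) : Prop :=
  x ≤ u ∧ ∀ ⦃w⦄, w ≤ u → Disjoint x w → w = ⊥

def IsEssential (x : α) : Prop :=
  ∀ ⦃w⦄, Disjoint x w → w = ⊥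

def IsIndepSeq (a : ℕ → α) : Prop :=
  (∀ k, ⊥ < a k) ∧ ∀ k, (range k).sup a ⊓ a k = ⊥

lemma exists_ne_bot_of_not_isEssentialIn {c d : α} (hcd : c ≤ d) (h : ¬IsEssentialIn c d) :
    ∃ w, w ≤ d ∧ Disjoint c w ∧ w ≠ ⊥ := by
  simpa [IsEssentialIn, hcd] using h

lemma IsEssentialIn.trans {x y z : α} (hxy : IsEssentialIn x y) (hyz : IsEssentialIn y z) :
    IsEssentialIn x z := by
  refine ⟨hxy.1.trans hyz.1, fun w hwz hxw => hyz.2 hwz ?_⟩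
  exact disjoint_iff.mpr (inf_comm y w ▸ hxy.2 inf_le_right (hxw.mono_right inf_le_left))

lemma IsEssentialIn.isEssential {x u : α} (hxu : IsEssentialIn x u) (hu : IsEssential u) :
    IsEssential x := fun w hxw =>
  hu (disjoint_iff.mpr (inf_comm u w ▸ hxu.2 inf_le_right (hxw.mono_right inf_le_left)))

lemma IsEssential.mono {x y : α} (hx : IsEssential x) (hxy : x ≤ y) : IsEssential y :=
  fun _ hyw => hx (hyw.mono_left hxy)

lemma IsQuasiAtom.isEssentialIn_inf {q b : α} (hq : IsQuasiAtom q) (hqb : ⊥ < q ⊓ b) :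
    IsEssentialIn (q ⊓ b) q := by
  refine ⟨inf_le_left, fun w hwq hdisj => ?_⟩
  by_contra hw
  exact (hq.2 _ _ hqb inf_le_left (bot_lt_iff_ne_bot.mpr hw) hwq).ne' hdisj.eq_bot

lemma Finset.SupIndep.injOn {ι : Type*} {s : Finset ι} {f : ι → α} (hs : s.SupIndep f)
    (hf : ∀ i ∈ s, f i ≠ ⊥) : Set.InjOn f s := by
  intro i hi j hj hij
  by_contra hne
  have hdisj : Disjoint (f i) (f j) := hs.pairwiseDisjoint hi hj hne
  exact hf i hi (disjoint_self.mp (hij ▸ hdisj))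

lemma isIndepSeq_of_monotone {c x : ℕ → α} (hc : ∀ n, c n ≤ c (n + 1))
    (hxc : ∀ n, x n ≤ c (n + 1)) (hx : ∀ n, x n ≠ ⊥) (hdisj : ∀ n, Disjoint (c n) (x n)) :
    IsIndepSeq x := by
  have hsup : ∀ k, (range k).sup x ≤ c k := fun k =>
    Finset.sup_le fun i hi => (hxc i).trans (monotone_nat_of_le_succ hc (mem_range.mp hi))
  exact ⟨fun k => bot_lt_iff_ne_bot.mpr (hx k), fun k => ((hdisj k).mono_left (hsup k)).eq_bot⟩

lemma wellFounded_flip_not_isEssentialIn (h : ¬∃ a : ℕ → α, IsIndepSeq a) :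
    WellFounded fun d c : α => c ≤ d ∧ ¬IsEssentialIn c d := by
  refine wellFounded_iff_isEmpty_descending_chain.mpr ⟨fun ⟨c, hc⟩ => h ?_⟩
  choose x hxc hdisj hx using fun n => exists_ne_bot_of_not_isEssentialIn (hc n).1 (hc n).2
  exact ⟨x, isIndepSeq_of_monotone (fun n => (hc n).1) hxc hx hdisj⟩

variable [IsModularLattice α]

lemma IsEssentialIn.sup_right {x u v : α} (hxu : IsEssentialIn x u) (huv : Disjoint u v) :
    IsEssentialIn (x ⊔ v) (u ⊔ v) := by
  refine ⟨sup_le_sup_right hxu.1 v, fun w hw hxvw => ?_⟩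
  have hvw : Disjoint v w := hxvw.mono_left le_sup_right
  have hx_vw : Disjoint x (v ⊔ w) :=
    (huv.mono_left hxu.1).disjoint_sup_right_of_disjoint_sup_left hxvw
  have hwvu : Disjoint (w ⊔ v) u := by
    rw [disjoint_iff, sup_comm]
    exact hxu.2 inf_le_right (hx_vw.mono_right inf_le_left)
  exact (hvw.symm.disjoint_sup_right_of_disjoint_sup_left hwvu).eq_bot_of_le (sup_comm u v ▸ hw)

lemma IsEssentialIn.sup {x u y v : α} (hxu : IsEssentialIn x u) (hyv : IsEssentialIn y v)
    (huv : Disjoint u v) : IsEssentialIn (x ⊔ y) (u ⊔ v) := by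
  have hyx := hyv.sup_right (huv.symm.mono_right hxu.1)
  rw [sup_comm y, sup_comm v] at hyx
  exact hyx.trans (hxu.sup_right huv)

lemma Finset.SupIndep.isEssentialIn_sup {ι : Type*} {s : Finset ι} {f g : ι → α}
    (hs : s.SupIndep f) (hg : ∀ i ∈ s, IsEssentialIn (g i) (f i)) :
    IsEssentialIn (s.sup g) (s.sup f) := by
  classical
  induction s using Finset.induction_on with
  | empty => exact ⟨le_rfl, fun _ hw _ => le_bot_iff.mp hw⟩
  | insert i s hi ih =>
    rw [sup_insert, sup_insert]
    refine (hg i (mem_insert_self i s)).sup (ih (hs.subset (subset_insert i s)) ?_) ?_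
    · exact fun j hj => hg j (mem_insert_of_mem hj)
    · exact hs (subset_insert i s) (mem_insert_self i s) hi

lemma isEssential_of_forall_inf_ne_bot {s : Finset α} (hs : s.SupIndep id)
    (hq : ∀ q ∈ s, IsQuasiAtom q) (hE : IsEssential (s.sup id)) {b : α}
    (hb : ∀ q ∈ s, q ⊓ b ≠ ⊥) : IsEssential b := by
  have hess : IsEssentialIn (s.sup (· ⊓ b)) (s.sup id) := hs.isEssentialIn_sup fun q hqs =>
    (hq q hqs).isEssentialIn_inf (bot_lt_iff_ne_bot.mpr (hb q hqs))
  exact (hess.isEssential hE).mono (Finset.sup_le fun _ _ => inf_le_right)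

lemma Finset.SupIndep.card_le_of_isEssential {s T : Finset α} (hs : s.SupIndep id)
    (hq : ∀ q ∈ s, IsQuasiAtom q) (hE : IsEssential (s.sup id)) (hT : T.SupIndep id)
    (hT0 : ⊥ ∉ T) : T.card ≤ s.card := by
  classical
  induction hn : (T \ s).card generalizing T with
  | zero => exact card_le_card (sdiff_eq_empty_iff_subset.mp (card_eq_zero.mp hn))
  | succ n ih =>
    obtain ⟨x, hx⟩ : (T \ s).Nonempty := card_pos.mp (by omega)
    obtain ⟨hxT, -⟩ := mem_sdiff.mp hx
    have hxb : Disjoint x ((T.erase x).sup id) := hT (erase_subset x T) hxT (notMem_erase x T)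
    obtain ⟨q, hqs, hqb⟩ : ∃ q ∈ s, q ⊓ (T.erase x).sup id = ⊥ := by
      by_contra! hb
      exact ne_of_mem_of_not_mem hxT hT0
        (isEssential_of_forall_inf_ne_bot hs hq hE hb hxb.symm)
    replace hqb : Disjoint q ((T.erase x).sup id) := disjoint_iff.mpr hqb
    have hqT : q ∉ T.erase x := fun h => (hq q hqs).1.ne' (hqb.eq_bot_of_le (le_sup (f := id) h))
    have hT' : (insert q (T.erase x)).SupIndep id := (hT.subset (erase_subset x T)).insert hqb
    have hT'0 : ⊥ ∉ insert q (T.erase x) := by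
      rw [mem_insert, not_or]
      exact ⟨(hq q hqs).1.ne, fun h => hT0 (mem_of_mem_erase h)⟩
    have hn' : (insert q (T.erase x) \ s).card = n := by
      rw [insert_sdiff_of_mem _ hqs, erase_sdiff_comm, card_erase_of_mem hx, hn]
      rfl
    have := ih hT' hT'0 hn'
    rwa [card_insert_of_notMem hqT, card_erase_add_one hxT] at this

lemma Finset.supIndep_of_disjoint_sup_filter_lt {ι : Type*} [LinearOrder ι] {s : Finset ι}
    {f : ι → α} (h : ∀ i ∈ s, Disjoint ((s.filter (· < i)).sup f) (f i)) : s.SupIndep f := by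
  classical
  induction s using Finset.induction_on_max with
  | empty => exact supIndep_empty f
  | insert a t hlt ih =>
    refine (ih fun i hi => ?_).insert ?_
    · have hfilter : (insert a t).filter (· < i) = t.filter (· < i) := by
        rw [filter_insert, if_neg (not_lt.mpr (hlt i hi).le)]
      simpa [hfilter] using h i (mem_insert_of_mem hi)
    · have hfilter : (insert a t).filter (· < a) = t := by
        rw [filter_insert, if_neg (lt_irrefl a), filter_true_of_mem hlt]
      simpa [hfilter] using (h a (mem_insert_self a t)).symm

lemma isIndepSeq_of_antitone {c x : ℕ → α} (hc : ∀ n, c (n + 1) ≤ c n) (hxc : ∀ n, x n ≤ c n)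
    (hx : ∀ n, x n ≠ ⊥) (hdisj : ∀ n, Disjoint (c (n + 1)) (x n)) : IsIndepSeq x := by
  have hsup : ∀ k, Disjoint ((range k).sup x) (c k) := by
    intro k
    induction k with
    | zero => simp
    | succ k ih =>
      rw [range_add_one, sup_insert, sup_comm]
      exact (hdisj k).symm.disjoint_sup_left_of_disjoint_sup_right
        (ih.mono_right (sup_le (hxc k) (hc k)))
  exact ⟨fun k => bot_lt_iff_ne_bot.mpr (hx k), fun k => ((hsup k).mono_right (hxc k)).eq_bot⟩

lemma wellFounded_not_isEssentialIn (h : ¬∃ a : ℕ → α, IsIndepSeq a) :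
    WellFounded fun c d : α => c ≤ d ∧ ¬IsEssentialIn c d := by
  refine wellFounded_iff_isEmpty_descending_chain.mpr ⟨fun ⟨c, hc⟩ => h ?_⟩
  choose x hxc hdisj hx using fun n => exists_ne_bot_of_not_isEssentialIn (hc n).1 (hc n).2
  exact ⟨x, isIndepSeq_of_antitone (fun n => (hc n).1) hxc hx hdisj⟩

lemma exists_isQuasiAtom_le (h : ¬∃ a : ℕ → α, IsIndepSeq a) {a : α} (ha : ⊥ < a) :
    ∃ q, IsQuasiAtom q ∧ q ≤ a := by
  obtain ⟨c, ⟨hc, hca⟩, hmin⟩ :=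
    (wellFounded_not_isEssentialIn h).has_min {c | ⊥ < c ∧ c ≤ a} ⟨a, ha, le_rfl⟩
  refine ⟨c, ⟨hc, fun x y hx hxc hy hyc => bot_lt_iff_ne_bot.mpr fun hxy => ?_⟩, hca⟩
  have hyc_ess : IsEssentialIn y c := by
    by_contra hy'
    exact hmin y ⟨hy, hyc.trans hca⟩ ⟨hyc, hy'⟩
  exact hx.ne' (hyc_ess.2 hxc (disjoint_iff.mpr (inf_comm y x ▸ hxy)))

lemma exists_supIndep_isQuasiAtom_isEssential (h : ¬∃ a : ℕ → α, IsIndepSeq a) :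
    ∃ s : Finset α, s.SupIndep id ∧ (∀ q ∈ s, IsQuasiAtom q) ∧ IsEssential (s.sup id) := by
  classical
  obtain ⟨_, ⟨s, hs, hq, rfl⟩, hmax⟩ := (wellFounded_flip_not_isEssentialIn h).has_min
    {E | ∃ s : Finset α, s.SupIndep id ∧ (∀ q ∈ s, IsQuasiAtom q) ∧ s.sup id = E}
    ⟨⊥, ∅, supIndep_empty id, by simp, sup_empty⟩
  refine ⟨s, hs, hq, fun w hw => ?_⟩
  by_contra hw0
  obtain ⟨q, hq', hqw⟩ := exists_isQuasiAtom_le h (bot_lt_iff_ne_bot.mpr hw0)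
  have hdisj : Disjoint (s.sup id) q := hw.mono_right hqw
  have hinsert : ∀ p ∈ insert q s, IsQuasiAtom p := fun p hp =>
    (mem_insert.mp hp).elim (· ▸ hq') (hq p)
  refine hmax (s.sup id ⊔ q) ⟨insert q s, hs.insert hdisj.symm, hinsert, ?_⟩
    ⟨le_sup_left, fun hess => hq'.1.ne' (hess.2 le_sup_right hdisj)⟩
  rw [sup_insert, sup_comm]
  rfl

end

/-- In a modular lattice with bottom element admitting no infinite independent
sequence: (a) below every nonzero element there is a quasi-atom, and (b) there is a
finite bound on the lengths of finite independent sequences. -/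
theorem quasiAtoms_exist_and_independence_bounded
    {M : Type*} [Lattice M] [OrderBot M] [IsModularLattice M]
    (h : ¬∃ a : ℕ → M, (∀ k, ⊥ < a k) ∧ ∀ k, (Finset.range k).sup a ⊓ a k = ⊥) :
    (∀ a : M, ⊥ < a → ∃ q : M, IsQuasiAtom q ∧ q ≤ a) ∧
    (∃ N : ℕ, ∀ (k : ℕ) (a : Fin k → M), (∀ i, ⊥ < a i) →
      (∀ i : Fin k, ((Finset.univ.filter fun j => j < i).sup a) ⊓ a i = ⊥) → k ≤ N) := by
  classical
  refine ⟨fun a ha => exists_isQuasiAtom_le h ha, ?_⟩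
  obtain ⟨s, hs, hq, hE⟩ := exists_supIndep_isQuasiAtom_isEssential h
  refine ⟨s.card, fun k a ha hindep => ?_⟩
  have ha_indep : (univ : Finset (Fin k)).SupIndep a :=
    supIndep_of_disjoint_sup_filter_lt fun i _ => disjoint_iff.mpr (hindep i)
  have ha_inj : Set.InjOn a (univ : Finset (Fin k)) := ha_indep.injOn fun i _ => (ha i).ne'
  have ha_ne_bot : ⊥ ∉ univ.image a := by simpa using fun i => (ha i).ne'
  calc k = (univ.image a).card := by rw [card_image_of_injOn ha_inj, card_univ, Fintype.card_fin]
    _ ≤ s.card := hs.card_le_of_isEssential hq hE (ha_indep.image (f := id)) ha_ne_bot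
end

section
/- Let M be a bounded modular lattice. (1) If q is a quasi-atom of M, then F_q := {x ∈ M : x ∧ q > ⊥} is a proper filter on M containing q. (2) Every proper filter on M containing q is contained in F_q; consequently F_q is a maximal proper filter. (3) If moreover rk_⊥(M) < ∞ (there is a finite bound on the sizes of strict cubes in M with base ⊥), then every maximal proper filter on M equals F_q for some quasi-atom q. -/
/-! If a maximal proper filter `F` is not of the form `F_q`, no element `a` with `F ⊆ F_a` is a
quasi-atom. Such an `a` therefore contains nonzero `u, v` with `u ⊓ v = ⊥`, and either `u` or
`a ⊓ w` (for a `w ∈ F` missing `u`) is a smaller element `b` with `F ⊆ F_b` and a nonzero piece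
of `a` disjoint from it. Iterating from `⊤` gives a descending chain `xₙ` with nonzero pieces
`dₙ ≤ xₙ` disjoint from `xₙ₊₁`. By modularity the `dₙ` are independent, so their joins over the
subsets of `{0, …, k - 1}` form a strict `k`-cube with base `⊥` for every `k`. -/

/-- A filter on a bounded lattice: contains `⊤`, closed under binary meets, and
upward closed. -/
def IsLatFilter {M : Type*} [Lattice M] [BoundedOrder M] (F : Set M) : Prop :=
  ⊤ ∈ F ∧ (∀ x ∈ F, ∀ y ∈ F, x ⊓ y ∈ F) ∧ ∀ x ∈ F, ∀ y : M, x ≤ y → y ∈ F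

open Finset

section BoundedLattice

variable {M : Type*} [Lattice M] [BoundedOrder M]

theorem IsQuasiAtom.isLatFilter {q : M} (hq : IsQuasiAtom q) :
    IsLatFilter {x : M | ⊥ < x ⊓ q} := by
  refine ⟨by simpa using hq.1, fun x hx y hy => ?_, fun x hx y hxy => ?_⟩
  · calc ⊥ < (x ⊓ q) ⊓ (y ⊓ q) := hq.2 _ _ hx inf_le_right hy inf_le_right
      _ = x ⊓ y ⊓ q := (inf_inf_distrib_right x y q).symm
  · exact hx.trans_le (inf_le_inf_right q hxy)

theorem IsLatFilter.subset_of_mem {F : Set M} (hF : IsLatFilter F) (hbot : ⊥ ∉ F) {q : M}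
    (hq : q ∈ F) : F ⊆ {x : M | ⊥ < x ⊓ q} := fun x hx =>
  bot_lt_iff_ne_bot.2 fun h => hbot (h ▸ hF.2.1 x hx q hq)

theorem IsQuasiAtom.eq_of_subset {q : M} (hq : IsQuasiAtom q) {G : Set M} (hG : IsLatFilter G)
    (hbot : ⊥ ∉ G) (hsub : {x : M | ⊥ < x ⊓ q} ⊆ G) : G = {x : M | ⊥ < x ⊓ q} :=
  (hG.subset_of_mem hbot (hsub (by simpa using hq.1))).antisymm hsub

theorem IsLatFilter.exists_disjoint_of_not_isQuasiAtom {F : Set M} (hF : IsLatFilter F) {a : M}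
    (ha : F ⊆ {x : M | ⊥ < x ⊓ a}) (hna : ¬ IsQuasiAtom a) :
    ∃ b c : M, F ⊆ {x : M | ⊥ < x ⊓ b} ∧ b ≤ a ∧ c ≤ a ∧ c ≠ ⊥ ∧ Disjoint c b := by
  have ha₀ : ⊥ < a := by simpa using ha hF.1
  obtain ⟨u, v, hu, hua, hv, hva, huv⟩ :
      ∃ u v : M, ⊥ < u ∧ u ≤ a ∧ ⊥ < v ∧ v ≤ a ∧ ¬ ⊥ < u ⊓ v := by
    simpa [IsQuasiAtom, ha₀] using hna
  by_cases huF : F ⊆ {x : M | ⊥ < x ⊓ u}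
  · refine ⟨u, v, huF, hua, hva, hv.ne', disjoint_iff.2 ?_⟩
    simpa [inf_comm, bot_lt_iff_ne_bot] using huv
  · obtain ⟨w, hwF, hw⟩ := Set.not_subset.1 huF
    refine ⟨a ⊓ w, u, fun x hx => ?_, inf_le_left, hua, hu.ne', ?_⟩
    · calc ⊥ < x ⊓ w ⊓ a := ha (hF.2.1 x hx w hwF)
        _ = x ⊓ (a ⊓ w) := by ac_rfl
    · refine (disjoint_iff.2 ?_).mono_right inf_le_right
      simpa [inf_comm, bot_lt_iff_ne_bot] using hw

end BoundedLattice

namespace Finset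

variable {ι M : Type*} [Lattice M] [OrderBot M] [IsModularLattice M]

theorem SupIndep.sup_inf_sup_s5 [DecidableEq ι] {s A B : Finset ι} {f : ι → M}
    (hs : s.SupIndep f) (hA : A ⊆ s) (hB : B ⊆ s) :
    A.sup f ⊓ B.sup f = (A ∩ B).sup f := by
  have hdisj : Disjoint ((A \ B).sup f) (B.sup f) :=
    hs.disjoint_sup_sup (sdiff_subset.trans hA) hB sdiff_disjoint
  calc A.sup f ⊓ B.sup f = ((A ∩ B).sup f ⊔ (A \ B).sup f) ⊓ B.sup f := by
        rw [← sup_union, union_comm, sdiff_union_inter]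
    _ = (A ∩ B).sup f := by
        rw [sup_inf_assoc_of_le _ (sup_mono inter_subset_right), hdisj.eq_bot, sup_bot_eq]

theorem supIndep_of_disjoint_sup_gt [LinearOrder ι] {f : ι → M}
    (h : ∀ i (t : Finset ι), (∀ j ∈ t, i < j) → Disjoint (f i) (t.sup f)) (s : Finset ι) :
    s.SupIndep f := by
  induction s using Finset.induction_on_min with
  | empty => exact supIndep_empty f
  | insert a t hat ht => exact ht.insert (h a t hat)

end Finset

section ModularLattice

variable {M : Type*} [Lattice M] [BoundedOrder M] [IsModularLattice M]

open Classical in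
theorem isStrictCube_sup_toFinset {k : ℕ} {c : Fin k → M}
    (hc : (univ : Finset (Fin k)).SupIndep c) (hne : ∀ i, c i ≠ ⊥) :
    IsStrictCube fun s : Set (Fin k) => s.toFinset.sup c := by
  refine ⟨fun s t hst => ?_, fun s t => ?_, fun s t => ?_⟩
  · ext i
    simpa [hc.le_sup_iff (subset_univ _) (mem_univ i) hne] using
      Iff.of_eq (congrArg (c i ≤ ·) hst)
  · simp only [Set.toFinset_union, sup_union]
  · simp only [Set.toFinset_inter, hc.sup_inf_sup_s5 (subset_univ _) (subset_univ _)]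

theorem exists_strictCube_of_antitone {x d : ℕ → M} (hx : Antitone x) (hdx : ∀ n, d n ≤ x n)
    (hne : ∀ n, d n ≠ ⊥) (hdisj : ∀ n, Disjoint (d n) (x (n + 1))) (k : ℕ) :
    ∃ f : Set (Fin k) → M, IsStrictCube f ∧ f ∅ = ⊥ := by
  classical
  have hindep : (univ : Finset (Fin k)).SupIndep fun i => d i :=
    supIndep_of_disjoint_sup_gt (f := fun i : Fin k => d i) (fun i t hit =>
      (hdisj i).mono_right <| Finset.sup_le fun j hj => (hdx j).trans (hx (hit j hj))) _
  exact ⟨_, isStrictCube_sup_toFinset hindep fun i => hne i, by simp⟩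

theorem exists_strictCube_of_forall_exists_disjoint {P : M → Prop} {a₀ : M} (h₀ : P a₀)
    (step : ∀ a, P a → ∃ b c : M, P b ∧ b ≤ a ∧ c ≤ a ∧ c ≠ ⊥ ∧ Disjoint c b) (k : ℕ) :
    ∃ f : Set (Fin k) → M, IsStrictCube f ∧ f ∅ = ⊥ := by
  choose next piece hP hle hpiece hne hdisj using step
  let seq (n : ℕ) : {a // P a} :=
    (fun a : {a // P a} => ⟨next a.1 a.2, hP a.1 a.2⟩)^[n] ⟨a₀, h₀⟩
  have hseq (n : ℕ) : (seq (n + 1)).1 = next (seq n).1 (seq n).2 := by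
    simp only [seq, Function.iterate_succ_apply']
  refine exists_strictCube_of_antitone (x := fun n => (seq n).1)
    (d := fun n => piece (seq n).1 (seq n).2) (antitone_nat_of_succ_le fun n => ?_)
    (fun n => hpiece _ _) (fun n => hne _ _) (fun n => ?_) k
  · exact (hseq n).trans_le (hle _ _)
  · simpa only [hseq] using hdisj _ _

theorem IsLatFilter.exists_isQuasiAtom_eq_of_maximal
    (hrk : ∃ N : ℕ, ∀ (k : ℕ) (f : Set (Fin k) → M), IsStrictCube f → f ∅ = ⊥ → k ≤ N)
    {F : Set M} (hF : IsLatFilter F) (hbot : ⊥ ∉ F)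
    (hmax : ∀ G : Set M, IsLatFilter G → ⊥ ∉ G → F ⊆ G → G = F) :
    ∃ q : M, IsQuasiAtom q ∧ F = {x : M | ⊥ < x ⊓ q} := by
  by_contra! hno
  have step (a : M) (ha : F ⊆ {x : M | ⊥ < x ⊓ a}) : ∃ b c : M,
      F ⊆ {x : M | ⊥ < x ⊓ b} ∧ b ≤ a ∧ c ≤ a ∧ c ≠ ⊥ ∧ Disjoint c b :=
    hF.exists_disjoint_of_not_isQuasiAtom ha fun hq =>
      hno a hq (hmax _ hq.isLatFilter (by simp) ha).symm
  obtain ⟨N, hN⟩ := hrk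
  obtain ⟨f, hf, hf₀⟩ := exists_strictCube_of_forall_exists_disjoint
    (P := fun a => F ⊆ {x : M | ⊥ < x ⊓ a}) (a₀ := ⊤) (by simpa using hF.subset_of_mem hbot hF.1)
    step (N + 1)
  exact absurd (hN _ f hf hf₀) (by omega)

end ModularLattice

/-- In a bounded modular lattice: for a quasi-atom `q`, the set
`F_q = {x | x ⊓ q > ⊥}` is a proper filter containing `q`; every proper filter
containing `q` is contained in `F_q`, and `F_q` is a maximal proper filter; and if
there is a finite bound on the sizes of strict cubes with base `⊥`, then every
maximal proper filter is of the form `F_q` for some quasi-atom `q`. -/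
theorem quasiAtom_filters
    {M : Type*} [Lattice M] [BoundedOrder M] [IsModularLattice M] :
    (∀ q : M, IsQuasiAtom q →
      IsLatFilter {x : M | ⊥ < x ⊓ q} ∧ (⊥ : M) ∉ {x : M | ⊥ < x ⊓ q} ∧
        q ∈ {x : M | ⊥ < x ⊓ q}) ∧
    (∀ q : M, IsQuasiAtom q → ∀ F : Set M, IsLatFilter F → (⊥ : M) ∉ F → q ∈ F →
      F ⊆ {x : M | ⊥ < x ⊓ q}) ∧
    (∀ q : M, IsQuasiAtom q → ∀ G : Set M, IsLatFilter G → (⊥ : M) ∉ G →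
      {x : M | ⊥ < x ⊓ q} ⊆ G → G = {x : M | ⊥ < x ⊓ q}) ∧
    ((∃ N : ℕ, ∀ (k : ℕ) (f : Set (Fin k) → M), IsStrictCube f → f ∅ = ⊥ → k ≤ N) →
      ∀ F : Set M, IsLatFilter F → (⊥ : M) ∉ F →
        (∀ G : Set M, IsLatFilter G → (⊥ : M) ∉ G → F ⊆ G → G = F) →
        ∃ q : M, IsQuasiAtom q ∧ F = {x : M | ⊥ < x ⊓ q}) :=
  ⟨fun _ hq => ⟨hq.isLatFilter, by simp, by simpa using hq.1⟩,
    fun _ _ _ hF hbot hqF => hF.subset_of_mem hbot hqF,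
    fun _ hq _ hG hbot hsub => hq.eq_of_subset hG hbot hsub,
    fun hrk _ hF hbot hmax => hF.exists_isQuasiAtom_eq_of_maximal hrk hbot hmax⟩
end

section
/- Let K be a field and O a valuation subring of K with maximal ideal 𝔪 and residue field k = O/𝔪. For a K-linear subspace V ≤ K^n define ς_n(V) := ((V ∩ O^n) + 𝔪^n)/𝔪^n ≤ k^n, the image of V ∩ O^n under the coordinatewise residue map O^n → k^n. Then: (1) each ς_n is inclusion-preserving; (2) ς_{n+m}(V ⊕ W) = ς_n(V) ⊕ ς_m(W) for V ≤ K^n, W ≤ K^m; (3) for every μ ∈ GL_n(O), ς_n(μ·V) = μ̄·ς_n(V), where μ̄ ∈ GL_n(k) is the entrywise residue of μ; (4) dim_k ς_n(V) = dim_K V for every V ≤ K^n. -/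
/-!
Every element of `valInflator O n V` is already the residue of a single vector of `V ∩ O^n`,
because `O → k` is surjective; inclusion-preservation, compatibility with direct sums and the
inclusion `μ̄ ς(V) ≤ ς(μ V)` follow at once, and applying the latter to `μ` and `μ⁻¹` gives
equivariance.

For dimensions: if the residues of `b₁, …, b_d ∈ O^n` are `k`-linearly independent, the family
is orthonormal, i.e. each coefficient of `∑ aᵢ bᵢ` is bounded in valuation by some coordinate.
Hence the `bᵢ` are `K`-independent, and when they span `V` over `K`, every vector of `V ∩ O^n` is
an `O`-combination of them, so `ς(V)` is spanned by the `b̄ᵢ`. Such a family exists for every `V`: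
scale a nonzero vector of `V` so that its coordinates lie in `O` and its `j`-th one is `1`, and
recurse into `V ∩ {x_j = 0}`.
-/

/-- The "direct sum" of a submodule of `Fin n → N` and a submodule of `Fin m → N`,
as a submodule of `Fin (n+m) → N`, under the standard identification. -/
def Submodule.finDSum {S N : Type*} [Ring S] [AddCommGroup N] [Module S N] {n m : ℕ}
    (V : Submodule S (Fin n → N)) (W : Submodule S (Fin m → N)) :
    Submodule S (Fin (n + m) → N) where
  carrier := {x | (fun i => x (Fin.castAdd m i)) ∈ V ∧ (fun j => x (Fin.natAdd n j)) ∈ W}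
  add_mem' := by
    rintro x y ⟨hx1, hx2⟩ ⟨hy1, hy2⟩
    exact ⟨V.add_mem hx1 hy1, W.add_mem hx2 hy2⟩
  zero_mem' := ⟨V.zero_mem, W.zero_mem⟩
  smul_mem' := by
    rintro c x ⟨hx1, hx2⟩
    exact ⟨V.smul_mem c hx1, W.smul_mem c hx2⟩

/-- The 1-inflator associated to a valuation subring `O` of `K`:
`ς_n(V) = ((V ∩ O^n) + 𝔪^n)/𝔪^n`, i.e. the image of `V ∩ O^n` under the
coordinatewise residue map `O^n → k^n`. -/
noncomputable def valInflator {K : Type*} [Field K] (O : ValuationSubring K) (n : ℕ)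
    (V : Submodule K (Fin n → K)) :
    Submodule (IsLocalRing.ResidueField O) (Fin n → IsLocalRing.ResidueField O) :=
  Submodule.span _ {w | ∃ x : Fin n → O, (fun i => (x i : K)) ∈ V ∧
    w = fun i => IsLocalRing.residue O (x i)}

open IsLocalRing Submodule

namespace ValuationSubring

variable {K : Type*} [Field K] (O : ValuationSubring K)

theorem div_mem_of_valuation_le {x y : K} (h : O.valuation x ≤ O.valuation y) : x / y ∈ O := by
  rcases eq_or_ne y 0 with rfl | hy
  · simp
  · apply O.mem_of_valuation_le_one
    rw [map_div₀]
    exact div_le_one_of_le₀ h zero_le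

theorem exists_primitive_mem {σ : Type*} [Finite σ] {V : Submodule K (σ → K)} (hV : V ≠ ⊥) :
    ∃ x : σ → O, (fun c => (x c : K)) ∈ V ∧ ∃ j, x j = 1 := by
  obtain ⟨w, hwV, hw⟩ := exists_mem_ne_zero_of_ne_bot hV
  obtain ⟨c₀, hc₀⟩ := Function.ne_iff.1 hw
  have : Nonempty σ := ⟨c₀⟩
  obtain ⟨j, hj⟩ := Finite.exists_max fun c => O.valuation (w c)
  have hwj : w j ≠ 0 := fun h => hc₀ (by simpa [h] using hj c₀)
  refine ⟨fun c => ⟨w c / w j, O.div_mem_of_valuation_le (hj c)⟩, ?_, j, Subtype.ext (div_self hwj)⟩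
  convert V.smul_mem (w j)⁻¹ hwV using 1
  ext c
  simp [div_eq_inv_mul]

section LinearIndependentResidue

variable {ι σ : Type*} [Fintype ι] {b : ι → σ → O}

-- Dividing by a coefficient of largest valuation would give a residue relation with a
-- coefficient `1`.
theorem valuation_le_of_linearIndependent_residue
    (hb : LinearIndependent (ResidueField O) fun i c => residue O (b i c))
    {a : ι → K} {r : O.ValueGroup}
    (h : ∀ c, O.valuation (∑ i, a i * b i c) ≤ r) (j : ι) : O.valuation (a j) ≤ r := by
  by_contra! hj
  have : Nonempty ι := ⟨j⟩
  obtain ⟨j₀, hj₀⟩ := Finite.exists_max fun i => O.valuation (a i)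
  have hr : r < O.valuation (a j₀) := hj.trans_le (hj₀ j)
  have ha₀ : a j₀ ≠ 0 := by
    rintro h0
    simp [h0] at hr
  let t : ι → O := fun i => ⟨a i / a j₀, O.div_mem_of_valuation_le (hj₀ i)⟩
  have ht : t j₀ = 1 := Subtype.ext (div_self ha₀)
  have hmem : ∀ c, ∑ i, t i * b i c ∈ maximalIdeal O := by
    intro c
    have hcoe : ((∑ i, t i * b i c : O) : K) = (∑ i, a i * b i c) / a j₀ := by
      push_cast [t]
      rw [Finset.sum_div]
      exact Finset.sum_congr rfl fun i _ => div_mul_eq_mul_div _ _ _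
    rw [valuation_lt_one_iff, hcoe, map_div₀, div_lt_one₀ (hr.trans_le' zero_le)]
    exact (h c).trans_lt hr
  have hrel : ∑ i, residue O (t i) • (fun c => residue O (b i c)) = 0 := by
    funext c
    simpa [← map_mul, ← map_sum] using (residue_eq_zero_iff _).2 (hmem c)
  simpa [ht] using Fintype.linearIndependent_iff.1 hb _ hrel j₀

theorem coeff_mem_of_linearIndependent_residue
    (hb : LinearIndependent (ResidueField O) fun i c => residue O (b i c))
    {a : ι → K} (h : ∀ c, ∑ i, a i * b i c ∈ O) (j : ι) : a j ∈ O :=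
  (O.valuation_le_one_iff _).1 <|
    O.valuation_le_of_linearIndependent_residue hb (fun c => (O.valuation_le_one_iff _).2 (h c)) j

theorem linearIndependent_of_linearIndependent_residue
    (hb : LinearIndependent (ResidueField O) fun i c => residue O (b i c)) :
    LinearIndependent K fun i c => (b i c : K) := by
  refine Fintype.linearIndependent_iff.2 fun a ha j => ?_
  have h : ∀ c, ∑ i, a i * b i c = 0 := fun c => by simpa using congrFun ha c
  simpa using O.valuation_le_of_linearIndependent_residue hb (r := 0) (fun c => by simp [h c]) j

end LinearIndependentResidue

end ValuationSubring

theorem Submodule.map_mulVecLin_map_mulVecLin_of_mul_eq_one {R S ι : Type*} [CommRing R]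
    [CommRing S] [Fintype ι] [DecidableEq ι] (f : R →+* S) {A B : Matrix ι ι R} (hAB : A * B = 1)
    (W : Submodule S (ι → S)) :
    (W.map (B.map f).mulVecLin).map (A.map f).mulVecLin = W := by
  rw [← map_comp, ← Matrix.mulVecLin_mul, ← Matrix.map_mul, hAB,
    Matrix.map_one _ f.map_zero f.map_one, Matrix.mulVecLin_one, map_id]

section valInflator

variable {K : Type*} [Field K] (O : ValuationSubring K)

theorem mem_valInflator_iff {n : ℕ} {V : Submodule K (Fin n → K)} {w : Fin n → ResidueField O} :
    w ∈ valInflator O n V ↔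
      ∃ x : Fin n → O, (fun i => (x i : K)) ∈ V ∧ w = fun i => residue O (x i) := by
  refine ⟨fun hw => ?_, fun hw => subset_span hw⟩
  induction hw using span_induction with
  | mem w hw => exact hw
  | zero => exact ⟨0, V.zero_mem, rfl⟩
  | add w w' _ _ hw hw' =>
    obtain ⟨x, hx, rfl⟩ := hw
    obtain ⟨x', hx', rfl⟩ := hw'
    exact ⟨x + x', V.add_mem hx hx', by ext; simp⟩
  | smul c w _ hw =>
    obtain ⟨a, rfl⟩ := residue_surjective c
    obtain ⟨x, hx, rfl⟩ := hw
    exact ⟨a • x, V.smul_mem (a : K) hx, by ext; simp⟩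

theorem valInflator_mono {n : ℕ} {V W : Submodule K (Fin n → K)} (h : V ≤ W) :
    valInflator O n V ≤ valInflator O n W :=
  span_mono fun _ ⟨x, hx, hw⟩ => ⟨x, h hx, hw⟩

theorem valInflator_finDSum {n m : ℕ} (V : Submodule K (Fin n → K))
    (W : Submodule K (Fin m → K)) :
    valInflator O (n + m) (V.finDSum W) = (valInflator O n V).finDSum (valInflator O m W) := by
  ext w
  constructor
  · intro hw
    obtain ⟨x, ⟨hxV, hxW⟩, rfl⟩ := (mem_valInflator_iff O).1 hw
    exact ⟨subset_span ⟨fun i => x (Fin.castAdd m i), hxV, rfl⟩,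
      subset_span ⟨fun j => x (Fin.natAdd n j), hxW, rfl⟩⟩
  · rintro ⟨hwV, hwW⟩
    obtain ⟨y, hy, hwy⟩ := (mem_valInflator_iff O).1 hwV
    obtain ⟨z, hz, hwz⟩ := (mem_valInflator_iff O).1 hwW
    refine (mem_valInflator_iff O).2 ⟨Fin.append y z, ⟨by simpa using hy, by simpa using hz⟩, ?_⟩
    rw [← Fin.append_castAdd_natAdd (f := w), hwy, hwz]
    ext i
    induction i using Fin.addCases <;> simp

open Matrix in
theorem map_valInflator_le {m n : ℕ} (μ : Matrix (Fin m) (Fin n) O)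
    (V : Submodule K (Fin n → K)) :
    (valInflator O n V).map (μ.map (residue O)).mulVecLin ≤
      valInflator O m (V.map (μ.map fun t => (t : K)).mulVecLin) := by
  rintro _ ⟨w, hw, rfl⟩
  obtain ⟨x, hx, rfl⟩ := (mem_valInflator_iff O).1 hw
  refine (mem_valInflator_iff O).2 ⟨μ *ᵥ x, ⟨_, hx, ?_⟩, ?_⟩ <;> ext i
  · exact (RingHom.map_mulVec O.subtype μ x i).symm
  · exact (RingHom.map_mulVec (residue O) μ x i).symm

theorem valInflator_map_of_isUnit {n : ℕ} {μ : Matrix (Fin n) (Fin n) O} (hμ : IsUnit μ)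
    (V : Submodule K (Fin n → K)) :
    valInflator O n (V.map (μ.map fun t => (t : K)).mulVecLin) =
      (valInflator O n V).map (μ.map (residue O)).mulVecLin := by
  obtain ⟨u, rfl⟩ := hμ
  have hV : (V.map (u.val.map fun t => (t : K)).mulVecLin).map
      ((u⁻¹).val.map fun t => (t : K)).mulVecLin = V :=
    map_mulVecLin_map_mulVecLin_of_mul_eq_one O.subtype u.inv_mul V
  refine le_antisymm ?_ (map_valInflator_le O _ V)
  calc _ = ((valInflator O n _).map ((u⁻¹).val.map (residue O)).mulVecLin).map
          (u.val.map (residue O)).mulVecLin := by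
        rw [map_mulVecLin_map_mulVecLin_of_mul_eq_one _ u.mul_inv]
    _ ≤ _ := map_mono (map_valInflator_le O _ _)
    _ = _ := by rw [hV]

theorem valInflator_eq_span_residue {n : ℕ} {ι : Type*} [Fintype ι]
    {V : Submodule K (Fin n → K)} {b : ι → Fin n → O}
    (hspan : span K (Set.range fun i c => (b i c : K)) = V)
    (hb : LinearIndependent (ResidueField O) fun i c => residue O (b i c)) :
    valInflator O n V = span (ResidueField O) (Set.range fun i c => residue O (b i c)) := by
  refine le_antisymm (fun w hw => ?_) (span_le.2 ?_)
  · obtain ⟨x, hx, rfl⟩ := (mem_valInflator_iff O).1 hw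
    rw [← hspan, mem_span_range_iff_exists_fun] at hx
    obtain ⟨a, ha⟩ := hx
    have hxa : ∀ c, ∑ i, a i * b i c = x c := fun c => by simpa using congrFun ha c
    have haO := O.coeff_mem_of_linearIndependent_residue hb fun c => hxa c ▸ (x c).2
    refine (mem_span_range_iff_exists_fun _).2 ⟨fun i => residue O ⟨a i, haO i⟩, ?_⟩
    ext c
    simp only [Finset.sum_apply, Pi.smul_apply, smul_eq_mul, ← map_mul, ← map_sum]
    congr 1
    ext
    push_cast
    exact hxa c
  · rintro _ ⟨i, rfl⟩
    exact subset_span ⟨b i, hspan ▸ subset_span ⟨i, rfl⟩, rfl⟩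

theorem exists_span_eq_linearIndependent_residue {n : ℕ} (V : Submodule K (Fin n → K)) :
    ∃ (d : ℕ) (b : Fin d → Fin n → O), span K (Set.range fun i c => (b i c : K)) = V ∧
      LinearIndependent (ResidueField O) fun i c => residue O (b i c) := by
  induction V using WellFoundedLT.induction with
  | _ V ih =>
  rcases eq_or_ne V ⊥ with rfl | hV
  · exact ⟨0, Fin.elim0, by simp, linearIndependent_empty_type⟩
  obtain ⟨x, hxV, j, hxj⟩ := O.exists_primitive_mem hV
  set V' := V ⊓ LinearMap.ker (LinearMap.proj j)
  have hV' : V' < V := inf_lt_left.2 fun h => by simpa [hxj] using h hxV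
  obtain ⟨d, b, hspan, hb⟩ := ih V' hV'
  have hbj : ∀ i, b i j = 0 := fun i => by
    have : (fun c => (b i c : K)) ∈ V' := hspan ▸ subset_span ⟨i, rfl⟩
    exact Subtype.ext (by simpa using this.2)
  refine ⟨d + 1, Fin.cons x b, ?_, ?_⟩
  · have hK : (fun i c => ((Fin.cons x b : Fin (d + 1) → Fin n → O) i c : K)) =
        Fin.cons (fun c => (x c : K)) fun i c => (b i c : K) := by
      ext i
      induction i using Fin.cases <;> rfl
    rw [hK, Fin.range_cons]
    refine le_antisymm (span_le.2 (Set.insert_subset hxV ?_)) fun w hw => ?_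
    · exact subset_span.trans (hspan.trans_le inf_le_left)
    · refine mem_span_insert.2 ⟨w j, w - w j • fun c => (x c : K), ?_, by abel⟩
      rw [hspan]
      exact ⟨V.sub_mem hw (V.smul_mem _ hxV), by simp [hxj]⟩
  · have hk : (fun i c => residue O ((Fin.cons x b : Fin (d + 1) → Fin n → O) i c)) =
        Fin.cons (fun c => residue O (x c)) fun i c => residue O (b i c) := by
      ext i
      induction i using Fin.cases <;> rfl
    rw [hk, linearIndependent_finCons]
    refine ⟨hb, fun h => ?_⟩
    have hker : span (ResidueField O) (Set.range fun i c => residue O (b i c)) ≤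
        LinearMap.ker (LinearMap.proj j) := span_le.2 (by rintro _ ⟨i, rfl⟩; simp [hbj])
    simpa [hxj] using hker h

theorem finrank_valInflator {n : ℕ} (V : Submodule K (Fin n → K)) :
    Module.finrank (ResidueField O) (valInflator O n V) = Module.finrank K V := by
  obtain ⟨d, b, hspan, hb⟩ := exists_span_eq_linearIndependent_residue O V
  rw [valInflator_eq_span_residue O hspan hb, finrank_span_eq_card hb, ← hspan,
    finrank_span_eq_card (O.linearIndependent_of_linearIndependent_residue hb)]

end valInflator

/-- The family `ς_n(V) = ((V ∩ O^n) + 𝔪^n)/𝔪^n` attached to a valuation subring `O`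
of `K` with residue field `k` is a 1-inflator: it is inclusion-preserving, compatible
with direct sums, `GL_n(O)`-equivariant (with the matrix acting on the residue side
through its entrywise residue), and preserves dimensions. -/
theorem valInflator_is_one_inflator {K : Type*} [Field K] (O : ValuationSubring K) :
    (∀ (n : ℕ) (V W : Submodule K (Fin n → K)), V ≤ W →
      valInflator O n V ≤ valInflator O n W) ∧
    (∀ (n m : ℕ) (V : Submodule K (Fin n → K)) (W : Submodule K (Fin m → K)),
      valInflator O (n + m) (V.finDSum W) =
        (valInflator O n V).finDSum (valInflator O m W)) ∧
    (∀ (n : ℕ) (μ : Matrix (Fin n) (Fin n) O), IsUnit μ →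
      ∀ V : Submodule K (Fin n → K),
        valInflator O n (V.map (Matrix.mulVecLin (μ.map fun t => (t : K)))) =
          (valInflator O n V).map
            (Matrix.mulVecLin (μ.map (IsLocalRing.residue O)))) ∧
    (∀ (n : ℕ) (V : Submodule K (Fin n → K)),
      Module.finrank (IsLocalRing.ResidueField O) (valInflator O n V) =
        Module.finrank K V) :=
  ⟨fun _ _ _ => valInflator_mono O, fun _ _ => valInflator_finDSum O,
    fun _ _ hμ => valInflator_map_of_isUnit O hμ, fun _ => finrank_valInflator O⟩
end

section
/- Let ς be a d-inflator on K. Then: (1) the fundamental ring R_ς is a K₀-subalgebra of K; (2) each α ∈ R_ς specializes to a unique φ ∈ End_R(M), and the resulting generalized residue map res : R_ς → End_R(M) is a ring homomorphism which is K₀-linear and sends each q ∈ K₀ to q·id_M; (3) the fundamental ideal I_ς is the kernel of res, hence an ideal of R_ς; (4) I_ς is contained in the Jacobson radical of R_ς; in particular every element of 1 + I_ς is a unit of R_ς. -/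
/-- The length of a module, as the Krull dimension of its submodule lattice. -/
noncomputable def moduleLength (R M : Type*) [Ring R] [AddCommGroup M] [Module R M] :
    WithBot ℕ∞ :=
  Order.krullDim (Submodule R M)

/-- The coordinatewise action of a `K₀`-matrix on `Fin m → N`, where `N` carries commuting
`K₀`- and `S`-actions, as an `S`-linear map. -/
def matVec {K₀ S N : Type*} [CommRing K₀] [Ring S] [AddCommGroup N] [Module S N]
    [Module K₀ N] [SMulCommClass K₀ S N] {n m : ℕ}
    (μ : Matrix (Fin n) (Fin m) K₀) : (Fin m → N) →ₗ[S] (Fin n → N) where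
  toFun x := fun i => ∑ j, μ i j • x j
  map_add' x y := by
    funext i
    simp [smul_add, Finset.sum_add_distrib]
  map_smul' c x := by
    funext i
    simp only [Pi.smul_apply, RingHom.id_apply, Finset.smul_sum]
    exact Finset.sum_congr rfl fun j _ => smul_comm _ _ _

/-- The graph `{(x, a·x) : x ∈ K}` as a `K`-subspace of `K² = Fin 2 → K`. -/
def graphK (K : Type*) [Field K] (a : K) : Submodule K (Fin 2 → K) where
  carrier := {v | v 1 = a * v 0}
  add_mem' := by
    intro x y hx hy
    simp only [Set.mem_setOf_eq, Pi.add_apply] at *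
    rw [hx, hy]; ring
  zero_mem' := by simp
  smul_mem' := by
    intro c x hx
    simp only [Set.mem_setOf_eq, Pi.smul_apply, smul_eq_mul] at *
    rw [hx]; ring

/-- The graph `{(u, φ(u)) : u ∈ M}` of an endomorphism, as an `R`-submodule of `M²`. -/
def graphM {R M : Type*} [Ring R] [AddCommGroup M] [Module R M] (φ : Module.End R M) :
    Submodule R (Fin 2 → M) where
  carrier := {v | v 1 = φ (v 0)}
  add_mem' := by
    intro x y hx hy
    simp only [Set.mem_setOf_eq, Pi.add_apply] at *
    rw [hx, hy, map_add]
  zero_mem' := by simp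
  smul_mem' := by
    intro c x hx
    simp only [Set.mem_setOf_eq, Pi.smul_apply] at *
    rw [hx, map_smul]

/-- A `d`-inflator on `K`, with target the pair `(R, M)`. -/
structure Inflator (K₀ K R M : Type*) [Field K₀] [Field K] [Algebra K₀ K]
    [Ring R] [Algebra K₀ R] [AddCommGroup M] [Module R M] [Module K₀ M]
    [SMulCommClass K₀ R M] (d : ℕ) where
  ς : ∀ n : ℕ, Submodule K (Fin n → K) → Submodule R (Fin n → M)
  mono : ∀ (n : ℕ) (V W : Submodule K (Fin n → K)), V ≤ W → ς n V ≤ ς n W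
  map_dsum : ∀ (n m : ℕ) (V : Submodule K (Fin n → K)) (W : Submodule K (Fin m → K)),
    ς (n + m) (V.finDSum W) = (ς n V).finDSum (ς m W)
  equivariant : ∀ (n : ℕ) (μ : Matrix (Fin n) (Fin n) K₀), IsUnit μ →
    ∀ V : Submodule K (Fin n → K),
      ς n (V.map (matVec (S := K) (N := K) μ)) = (ς n V).map (matVec (S := R) (N := M) μ)
  length_eq : ∀ (n : ℕ) (V : Submodule K (Fin n → K)),
    moduleLength R (ς n V) = ((d * Module.finrank K V : ℕ) : ℕ∞)

namespace Inflator

variable {K₀ K R M : Type*} [Field K₀] [Field K] [Algebra K₀ K]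
    [Ring R] [Algebra K₀ R] [AddCommGroup M] [Module R M] [Module K₀ M]
    [SMulCommClass K₀ R M] {d : ℕ}

/-- `a ∈ K` specializes to the endomorphism `φ` of `M`. -/
def Specializes (I : Inflator K₀ K R M d) (a : K) (φ : Module.End R M) : Prop :=
  I.ς 2 (graphK K a) = graphM φ

/-- The fundamental ring of an inflator, as a subset of `K`. -/
def fundSet (I : Inflator K₀ K R M d) : Set K :=
  {a | ∃ φ : Module.End R M, I.Specializes a φ}

/-- The fundamental ideal of an inflator, as a subset of `K`. -/
def fundIdealSet (I : Inflator K₀ K R M d) : Set K :=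
  {a | I.Specializes a 0}

end Inflator

/-!
Whether `a` specializes to `φ` is read off from `ς₂(Θ_a)`. Two facts pin such images down:
`ς` commutes with invertible `K₀`-matrices and with direct sums, and a submodule contained in
another one of the same finite length equals it. The matrices `!![1, 0; c, e]` and
`!![0, 1; 1, 0]` move `Θ_a` to `Θ_(c + e a)` and `Θ_(a⁻¹)`. For sums and products one passes
to the line `{(x, a x, b x)}` in `K³`: it is an intersection of two planes built from graphs by
direct sums and permutations of coordinates, so its image lies in the line `{(u, φ u, ψ u)}`
in `M³`, and both have length `d`. A row operation turns `(a, b)` into `(a + b, b)`, and the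
line `{(x, b x, a b x)} = (Θ_b ⊕ K) ∩ (K ⊕ Θ_a)` gives the product. Finally `1 + r a`
specializes to the identity, which is nonzero since `d ≥ 1`; so `1 + r a ≠ 0`, and its inverse
specializes to the identity too.
-/

lemma Submodule.eq_of_le_of_length_eq {R M : Type*} [Ring R] [AddCommGroup M] [Module R M]
    {N P : Submodule R M} (hle : N ≤ P)
    (h : Module.length R N = Module.length R P) (hfin : Module.length R P ≠ ⊤) : N = P := by
  rw [Module.length_submodule, Module.length_submodule] at h
  rw [Module.length_submodule] at hfin
  by_contra hne
  exact (Order.height_strictMono (hle.lt_of_ne hne) (h ▸ hfin.lt_top)).ne h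

section MatVec

variable {K₀ S N : Type*} [CommRing K₀] [Ring S] [AddCommGroup N] [Module S N]
  [Module K₀ N] [SMulCommClass K₀ S N]

lemma matVec_apply {n m : ℕ} (μ : Matrix (Fin n) (Fin m) K₀) (x : Fin m → N) (i : Fin n) :
    matVec (S := S) μ x i = ∑ j, μ i j • x j := rfl

lemma matVec_mul {n m k : ℕ} (μ : Matrix (Fin n) (Fin m) K₀) (ν : Matrix (Fin m) (Fin k) K₀)
    (x : Fin k → N) :
    matVec (S := S) (μ * ν) x = matVec (S := S) μ (matVec (S := S) ν x) := by
  funext i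
  simp only [matVec_apply, Matrix.mul_apply, Finset.sum_smul, mul_smul, Finset.smul_sum]
  exact Finset.sum_comm

lemma matVec_one {n : ℕ} (x : Fin n → N) :
    matVec (S := S) (1 : Matrix (Fin n) (Fin n) K₀) x = x := by
  funext i
  simp [matVec_apply, Matrix.one_apply]

lemma matVec_fin_two (a b c e : K₀) (x : Fin 2 → N) :
    matVec (S := S) !![a, b; c, e] x = ![a • x 0 + b • x 1, c • x 0 + e • x 1] := by
  funext i
  fin_cases i <;> simp [matVec_apply, Fin.sum_univ_two]

lemma matVec_fin_three (a b c d e f g h k : K₀) (x : Fin 3 → N) :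
    matVec (S := S) !![a, b, c; d, e, f; g, h, k] x =
      ![a • x 0 + b • x 1 + c • x 2, d • x 0 + e • x 1 + f • x 2,
        g • x 0 + h • x 1 + k • x 2] := by
  funext i
  fin_cases i <;> simp [matVec_apply, Fin.sum_univ_three]

lemma Submodule.mem_map_matVec_iff {n : ℕ} {μ ν : Matrix (Fin n) (Fin n) K₀} (h : ν * μ = 1)
    {P : Submodule S (Fin n → N)} {x : Fin n → N} :
    x ∈ P.map (matVec μ) ↔ matVec (S := S) ν x ∈ P := by
  constructor
  · rintro ⟨y, hy, rfl⟩
    rwa [← matVec_mul, h, matVec_one]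
  · intro hx
    refine ⟨_, hx, ?_⟩
    rw [← matVec_mul, mul_eq_one_comm.mp h, matVec_one]

end MatVec

section Graphs

variable {S N : Type*} [Ring S] [AddCommGroup N] [Module S N]

@[simp]
lemma mem_graphM {χ : Module.End S N} {v : Fin 2 → N} : v ∈ graphM χ ↔ v 1 = χ (v 0) :=
  Iff.rfl

@[simp]
lemma mem_graphM_finDSum_top {χ : Module.End S N} {x : Fin 3 → N} :
    x ∈ (graphM χ).finDSum (⊤ : Submodule S (Fin 1 → N)) ↔ x 1 = χ (x 0) :=
  ⟨And.left, fun h => ⟨h, trivial⟩⟩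

@[simp]
lemma mem_top_finDSum_graphM {χ : Module.End S N} {x : Fin 3 → N} :
    x ∈ (⊤ : Submodule S (Fin 1 → N)).finDSum (graphM χ) ↔ x 2 = χ (x 1) :=
  ⟨And.right, fun h => ⟨trivial, h⟩⟩

lemma graphM_injective : Function.Injective (graphM : Module.End S N → _) := by
  intro χ ψ h
  ext u
  have hu : ![u, χ u] ∈ graphM ψ := h ▸ (by simp)
  simpa using hu

lemma graphM_zero :
    graphM (0 : Module.End S N) =
      (⊤ : Submodule S (Fin 1 → N)).finDSum (⊥ : Submodule S (Fin 1 → N)) := by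
  ext x
  simp [Submodule.finDSum, funext_iff, Fin.forall_fin_one]

def graphPair (χ ψ : Module.End S N) : Submodule S (Fin 3 → N) where
  carrier := {v | v 1 = χ (v 0) ∧ v 2 = ψ (v 0)}
  add_mem' := by
    rintro x y ⟨hx₁, hx₂⟩ ⟨hy₁, hy₂⟩
    simp [hx₁, hx₂, hy₁, hy₂]
  zero_mem' := by simp
  smul_mem' := by
    rintro c x ⟨hx₁, hx₂⟩
    simp [hx₁, hx₂]

@[simp]
lemma mem_graphPair {χ ψ : Module.End S N} {v : Fin 3 → N} :
    v ∈ graphPair χ ψ ↔ v 1 = χ (v 0) ∧ v 2 = ψ (v 0) :=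
  Iff.rfl

lemma graphPair_le_finDSum (χ ψ : Module.End S N) :
    graphPair χ ψ ≤ (graphM χ).finDSum (⊤ : Submodule S (Fin 1 → N)) := by
  intro x hx
  simpa using hx.1

lemma graphPair_mul_eq_inf (χ ψ : Module.End S N) :
    graphPair χ (ψ * χ) =
      (graphM χ).finDSum (⊤ : Submodule S (Fin 1 → N)) ⊓
        (⊤ : Submodule S (Fin 1 → N)).finDSum (graphM ψ) := by
  ext x
  simp +contextual

lemma graphM_le_of_graphPair_le {χ ψ : Module.End S N} {P : Submodule S (Fin 2 → N)}
    (h : graphPair χ ψ ≤ P.finDSum (⊤ : Submodule S (Fin 1 → N))) : graphM χ ≤ P := by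
  intro x hx
  have := (h (x := ![x 0, x 1, ψ (x 0)]) (by simpa using hx)).1
  convert this using 1
  funext i
  fin_cases i <;> rfl

variable {K₀ : Type*} [CommRing K₀] [Module K₀ N] [SMulCommClass K₀ S N]

lemma graphM_map_lowerTriangular [SMulCommClass S K₀ N] (c e : K₀) (χ : Module.End S N) :
    (graphM χ).map (matVec !![1, 0; c, e]) = graphM (c • 1 + e • χ) := by
  ext x
  simp only [Submodule.mem_map, mem_graphM]
  constructor
  · rintro ⟨y, hy, rfl⟩
    simp [matVec_fin_two, hy]
  · intro hx
    refine ⟨![x 0, χ (x 0)], by simp, ?_⟩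
    rw [matVec_fin_two]
    funext i
    fin_cases i <;> simp [hx]

lemma graphM_map_swap {χ ψ : Module.End S N} (hψχ : ψ * χ = 1) (hχψ : χ * ψ = 1) :
    (graphM χ).map (matVec (!![0, 1; 1, 0] : Matrix _ _ K₀)) = graphM ψ := by
  ext x
  rw [Submodule.mem_map_matVec_iff (S := S) (ν := !![0, 1; 1, 0])
    (by simp [Matrix.one_fin_two])]
  simp only [mem_graphM, matVec_fin_two, Matrix.cons_val_zero, Matrix.cons_val_one, one_smul,
    zero_smul, zero_add, add_zero]
  constructor <;> intro hx
  · rw [hx, ← Module.End.mul_apply, hψχ, Module.End.one_apply]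
  · rw [hx, ← Module.End.mul_apply, hχψ, Module.End.one_apply]

lemma graphPair_map_swap (χ ψ : Module.End S N) :
    (graphPair χ ψ).map (matVec (!![1, 0, 0; 0, 0, 1; 0, 1, 0] : Matrix _ _ K₀)) =
      graphPair ψ χ := by
  ext x
  rw [Submodule.mem_map_matVec_iff (S := S) (ν := !![1, 0, 0; 0, 0, 1; 0, 1, 0])
    (by simp [Matrix.one_fin_three])]
  simpa [matVec_fin_three] using and_comm

lemma graphPair_map_addRow (χ ψ : Module.End S N) :
    (graphPair χ ψ).map (matVec (!![1, 0, 0; 0, 1, 1; 0, 0, 1] : Matrix _ _ K₀)) =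
      graphPair (χ + ψ) ψ := by
  ext x
  rw [Submodule.mem_map_matVec_iff (S := S) (ν := !![1, 0, 0; 0, 1, -1; 0, 0, 1])
    (by simp [Matrix.one_fin_three])]
  simp +contextual [matVec_fin_three, ← sub_eq_add_neg, sub_eq_iff_eq_add]

lemma graphPair_eq_inf (χ ψ : Module.End S N) :
    graphPair χ ψ = (graphM χ).finDSum (⊤ : Submodule S (Fin 1 → N)) ⊓
      ((graphM ψ).finDSum (⊤ : Submodule S (Fin 1 → N))).map
        (matVec (!![1, 0, 0; 0, 0, 1; 0, 1, 0] : Matrix _ _ K₀)) := by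
  ext x
  rw [Submodule.mem_inf, Submodule.mem_map_matVec_iff (S := S)
    (ν := !![1, 0, 0; 0, 0, 1; 0, 1, 0]) (by simp [Matrix.one_fin_three])]
  simp [matVec_fin_three]

def graphMEquiv (χ : Module.End S N) : graphM χ ≃ₗ[S] N where
  toFun v := v.1 0
  invFun u := ⟨![u, χ u], by simp⟩
  left_inv v := Subtype.ext <| funext fun i => by
    fin_cases i
    · rfl
    · exact v.2.symm
  right_inv _ := rfl
  map_add' _ _ := rfl
  map_smul' _ _ := rfl

def graphPairEquiv (χ ψ : Module.End S N) : graphPair χ ψ ≃ₗ[S] N where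
  toFun v := v.1 0
  invFun u := ⟨![u, χ u, ψ u], by simp⟩
  left_inv v := Subtype.ext <| funext fun i => by
    fin_cases i
    · rfl
    · exact v.2.1.symm
    · exact v.2.2.symm
  right_inv _ := rfl
  map_add' _ _ := rfl
  map_smul' _ _ := rfl

lemma length_graphM (χ : Module.End S N) : Module.length S (graphM χ) = Module.length S N :=
  (graphMEquiv χ).length_eq

lemma length_graphPair (χ ψ : Module.End S N) :
    Module.length S (graphPair χ ψ) = Module.length S N :=
  (graphPairEquiv χ ψ).length_eq

lemma finrank_graphM (χ : Module.End S N) : Module.finrank S (graphM χ) = Module.finrank S N :=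
  (graphMEquiv χ).finrank_eq

lemma finrank_graphPair (χ ψ : Module.End S N) :
    Module.finrank S (graphPair χ ψ) = Module.finrank S N :=
  (graphPairEquiv χ ψ).finrank_eq

end Graphs

section ScalarGraphs

variable {K₀ K : Type*} [Field K₀] [Field K] [Algebra K₀ K]

@[simp]
lemma mem_graphK {a : K} {v : Fin 2 → K} : v ∈ graphK K a ↔ v 1 = a * v 0 :=
  Iff.rfl

lemma graphK_eq_graphM (a : K) : graphK K a = graphM (a • 1) := by
  ext v
  simp

lemma finrank_graphK (a : K) : Module.finrank K (graphK K a) = 1 := by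
  rw [graphK_eq_graphM, finrank_graphM, Module.finrank_self]

lemma graphK_affine_eq_map (a : K) (c e : K₀) :
    graphK K (algebraMap K₀ K c + algebraMap K₀ K e * a) =
      (graphK K a).map (matVec !![1, 0; c, e]) := by
  rw [graphK_eq_graphM, graphK_eq_graphM, graphM_map_lowerTriangular]
  congr 1
  ext
  simp [Algebra.smul_def]

lemma graphK_inv_eq_map {c : K} (hc : c ≠ 0) :
    graphK K c⁻¹ = (graphK K c).map (matVec (!![0, 1; 1, 0] : Matrix _ _ K₀)) := by
  rw [graphK_eq_graphM, graphK_eq_graphM, graphM_map_swap] <;>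
    ext <;> simp [hc]

end ScalarGraphs

namespace Inflator

open Module

variable {K₀ K R M : Type*} [Field K₀] [Field K] [Algebra K₀ K]
    [Ring R] [Algebra K₀ R] [AddCommGroup M] [Module R M] [Module K₀ M]
    [SMulCommClass K₀ R M] {d : ℕ} (I : Inflator K₀ K R M d)

lemma length_ς (n : ℕ) (V : Submodule K (Fin n → K)) :
    length R (I.ς n V) = (d * finrank K V : ℕ) :=
  WithBot.coe_injective ((coe_length R _).trans (I.length_eq n V))

lemma ς_eq_of_le {n : ℕ} {V : Submodule K (Fin n → K)} {T : Submodule R (Fin n → M)}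
    (h : I.ς n V ≤ T) (hT : length R T = (d * finrank K V : ℕ)) : I.ς n V = T :=
  Submodule.eq_of_le_of_length_eq h (by rw [length_ς, hT]) (hT ▸ ENat.natCast_ne_top _)

lemma eq_ς_of_le {n : ℕ} {V : Submodule K (Fin n → K)} {T : Submodule R (Fin n → M)}
    (h : T ≤ I.ς n V) (hT : length R T = (d * finrank K V : ℕ)) : T = I.ς n V :=
  Submodule.eq_of_le_of_length_eq h (by rw [length_ς, hT])
    (by rw [length_ς]; exact ENat.natCast_ne_top _)

lemma ς_inf_le {n : ℕ} (V W : Submodule K (Fin n → K)) :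
    I.ς n (V ⊓ W) ≤ I.ς n V ⊓ I.ς n W :=
  le_inf (I.mono _ _ _ inf_le_left) (I.mono _ _ _ inf_le_right)

lemma ς_bot (n : ℕ) : I.ς n ⊥ = ⊥ := by
  have : Subsingleton (I.ς n ⊥) := length_eq_zero_iff.mp (by rw [I.length_ς]; simp)
  exact Submodule.eq_bot_of_subsingleton

lemma ς_top_one (hM : length R M = d) : I.ς 1 ⊤ = ⊤ :=
  I.ς_eq_of_le le_top (by simp [hM])

lemma ς_graphK_finDSum_top (hM : length R M = d) (a : K) :
    I.ς 3 ((graphK K a).finDSum (⊤ : Submodule K (Fin 1 → K))) =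
      (I.ς 2 (graphK K a)).finDSum (⊤ : Submodule R (Fin 1 → M)) :=
  (I.map_dsum 2 1 _ _).trans (by rw [I.ς_top_one hM])

lemma ς_top_finDSum_graphK (hM : length R M = d) (a : K) :
    I.ς 3 ((⊤ : Submodule K (Fin 1 → K)).finDSum (graphK K a)) =
      (⊤ : Submodule R (Fin 1 → M)).finDSum (I.ς 2 (graphK K a)) :=
  (I.map_dsum 1 2 _ _).trans (by rw [I.ς_top_one hM])

lemma specializes_zero (hM : length R M = d) : I.Specializes 0 0 := by
  have h : graphK K 0 =
      (⊤ : Submodule K (Fin 1 → K)).finDSum (⊥ : Submodule K (Fin 1 → K)) := by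
    rw [graphK_eq_graphM, zero_smul, graphM_zero]
  rw [Specializes, h, I.map_dsum 1 1, I.ς_top_one hM, ς_bot, graphM_zero]

variable {I}

lemma Specializes.unique {a : K} {φ ψ : Module.End R M} (hφ : I.Specializes a φ)
    (hψ : I.Specializes a ψ) : φ = ψ :=
  graphM_injective (hφ.symm.trans hψ)

lemma Specializes.ne_zero (hM : length R M = d) {c : K} {φ : Module.End R M}
    (h : I.Specializes c φ) (hφ : φ ≠ 0) : c ≠ 0 := by
  rintro rfl
  exact hφ (h.unique (I.specializes_zero hM))

lemma Specializes.affine [SMulCommClass R K₀ M] {a : K} {φ : Module.End R M}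
    (h : I.Specializes a φ) (c : K₀) {e : K₀} (he : e ≠ 0) :
    I.Specializes (algebraMap K₀ K c + algebraMap K₀ K e * a) (c • 1 + e • φ) := by
  have hμ : IsUnit !![1, 0; c, e] := by simp [Matrix.isUnit_iff_isUnit_det, he]
  rw [Specializes, graphK_affine_eq_map, I.equivariant 2 _ hμ, h, graphM_map_lowerTriangular]

lemma Specializes.algebraMap_mul [SMulCommClass R K₀ M] (hM : length R M = d) {a : K}
    {φ : Module.End R M} (h : I.Specializes a φ) (q : K₀) :
    I.Specializes (algebraMap K₀ K q * a) (q • φ) := by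
  rcases eq_or_ne q 0 with rfl | hq
  · simpa using I.specializes_zero hM
  · simpa using h.affine 0 hq

lemma Specializes.inv {c : K} {φ ψ : Module.End R M} (h : I.Specializes c φ) (hc : c ≠ 0)
    (hψφ : ψ * φ = 1) (hφψ : φ * ψ = 1) : I.Specializes c⁻¹ ψ := by
  have hμ : IsUnit (!![0, 1; 1, 0] : Matrix (Fin 2) (Fin 2) K₀) := by
    simp [Matrix.isUnit_iff_isUnit_det]
  rw [Specializes, graphK_inv_eq_map (K₀ := K₀) hc, I.equivariant 2 _ hμ, h,
    graphM_map_swap hψφ hφψ]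

lemma ς_graphPair (hM : length R M = d) {a b : K} {φ ψ : Module.End R M}
    (ha : I.Specializes a φ) (hb : I.Specializes b ψ) :
    I.ς 3 (graphPair (a • 1) (b • 1)) = graphPair φ ψ := by
  have hσ : IsUnit (!![1, 0, 0; 0, 0, 1; 0, 1, 0] : Matrix (Fin 3) (Fin 3) K₀) := by
    simp [Matrix.isUnit_iff_isUnit_det, Matrix.det_fin_three]
  refine I.ς_eq_of_le ?_ (by rw [length_graphPair, hM, finrank_graphPair, finrank_self, mul_one])
  rw [graphPair_eq_inf (K₀ := K₀), graphPair_eq_inf (K₀ := K₀), ← graphK_eq_graphM,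
    ← graphK_eq_graphM, ← ha, ← hb, ← I.ς_graphK_finDSum_top hM,
    ← I.ς_graphK_finDSum_top hM, ← I.equivariant 3 _ hσ]
  exact I.ς_inf_le _ _

lemma specializes_of_ς_graphPair (hM : length R M = d) {a c : K} {χ ψ : Module.End R M}
    (h : I.ς 3 (graphPair (a • 1) (c • 1)) = graphPair χ ψ) : I.Specializes a χ := by
  have hle :
      graphPair χ ψ ≤ (I.ς 2 (graphK K a)).finDSum (⊤ : Submodule R (Fin 1 → M)) := by
    rw [← h, ← I.ς_graphK_finDSum_top hM, graphK_eq_graphM]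
    exact I.mono _ _ _ (graphPair_le_finDSum _ _)
  exact (I.eq_ς_of_le (graphM_le_of_graphPair_le hle)
    (by rw [length_graphM, hM, finrank_graphK, mul_one])).symm

lemma Specializes.add (hM : length R M = d) {a b : K} {φ ψ : Module.End R M}
    (ha : I.Specializes a φ) (hb : I.Specializes b ψ) : I.Specializes (a + b) (φ + ψ) := by
  have hε : IsUnit (!![1, 0, 0; 0, 1, 1; 0, 0, 1] : Matrix (Fin 3) (Fin 3) K₀) := by
    simp [Matrix.isUnit_iff_isUnit_det, Matrix.det_fin_three]
  refine specializes_of_ς_graphPair hM (c := b) (ψ := ψ) ?_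
  rw [add_smul, ← graphPair_map_addRow (K₀ := K₀), I.equivariant 3 _ hε,
    ς_graphPair hM ha hb, graphPair_map_addRow]

lemma Specializes.mul (hM : length R M = d) {a b : K} {φ ψ : Module.End R M}
    (ha : I.Specializes a φ) (hb : I.Specializes b ψ) : I.Specializes (a * b) (φ * ψ) := by
  have hσ : IsUnit (!![1, 0, 0; 0, 0, 1; 0, 1, 0] : Matrix (Fin 3) (Fin 3) K₀) := by
    simp [Matrix.isUnit_iff_isUnit_det, Matrix.det_fin_three]
  have hline : I.ς 3 (graphPair (b • 1) ((a * b) • 1)) = graphPair ψ (φ * ψ) := by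
    refine I.ς_eq_of_le ?_ (by rw [length_graphPair, hM, finrank_graphPair, finrank_self, mul_one])
    have hab : ((a * b) • 1 : Module.End K K) = (a • 1) * (b • 1) := by
      rw [smul_mul_smul_comm, one_mul]
    rw [hab, graphPair_mul_eq_inf, graphPair_mul_eq_inf, ← graphK_eq_graphM,
      ← graphK_eq_graphM, ← ha, ← hb, ← I.ς_graphK_finDSum_top hM,
      ← I.ς_top_finDSum_graphK hM]
    exact I.ς_inf_le _ _
  refine specializes_of_ς_graphPair hM (c := b) (ψ := ψ) ?_
  rw [← graphPair_map_swap (K₀ := K₀), I.equivariant 3 _ hσ, hline, graphPair_map_swap]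

variable (I)

lemma specializes_algebraMap [SMulCommClass R K₀ M] (hM : length R M = d) (q : K₀) :
    I.Specializes (algebraMap K₀ K q) (q • 1) := by
  simpa using (I.specializes_zero hM).affine q one_ne_zero

lemma specializes_one (hM : length R M = d) : I.Specializes 1 1 := by
  have := SMulCommClass.symm K₀ R M
  simpa using I.specializes_algebraMap hM (1 : K₀)

/-- Outside the fundamental ring this is an arbitrary endomorphism. -/
noncomputable def residue (a : K) : Module.End R M :=
  Classical.epsilon (I.Specializes a)

lemma specializes_residue {a : K} (ha : a ∈ I.fundSet) : I.Specializes a (I.residue a) :=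
  Classical.epsilon_spec ha

def fundSubalgebra (hM : length R M = d) : Subalgebra K₀ K where
  carrier := I.fundSet
  mul_mem' ha hb := ⟨_, (I.specializes_residue ha).mul hM (I.specializes_residue hb)⟩
  add_mem' ha hb := ⟨_, (I.specializes_residue ha).add hM (I.specializes_residue hb)⟩
  algebraMap_mem' q := by
    have := SMulCommClass.symm K₀ R M
    exact ⟨_, I.specializes_algebraMap hM q⟩

variable {I}

lemma Specializes.residue_eq {a : K} {φ : Module.End R M} (h : I.Specializes a φ) :
    I.residue a = φ :=
  (I.specializes_residue ⟨φ, h⟩).unique h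

end Inflator

theorem fundamental_ring_and_ideal_general
    {K₀ K R M : Type*} [Field K₀] [Field K] [Algebra K₀ K]
    [Ring R] [Algebra K₀ R] [AddCommGroup M] [Module R M] [Module K₀ M]
    [SMulCommClass K₀ R M] {d : ℕ} (hd : 1 ≤ d)
    (hM : moduleLength R M = ((d : ℕ∞) : WithBot ℕ∞))
    (I : Inflator K₀ K R M d) :
    (∃ A : Subalgebra K₀ K, (A : Set K) = I.fundSet) ∧
    (∃ res : K → Module.End R M,
      (∀ a ∈ I.fundSet, I.Specializes a (res a)) ∧
      (∀ a ∈ I.fundSet, ∀ φ : Module.End R M, I.Specializes a φ → φ = res a) ∧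
      (∀ a ∈ I.fundSet, ∀ b ∈ I.fundSet, res (a + b) = res a + res b) ∧
      (∀ a ∈ I.fundSet, ∀ b ∈ I.fundSet, res (a * b) = res a * res b) ∧
      res 1 = 1 ∧
      (∀ (q : K₀) (u : M), res (algebraMap K₀ K q) u = q • u) ∧
      (∀ (q : K₀), ∀ a ∈ I.fundSet, ∀ u : M,
        res (algebraMap K₀ K q * a) u = q • res a u) ∧
      (∀ a ∈ I.fundSet, (a ∈ I.fundIdealSet ↔ res a = 0))) ∧
    (I.fundIdealSet ⊆ I.fundSet ∧
      (∀ a ∈ I.fundIdealSet, ∀ b ∈ I.fundIdealSet, a + b ∈ I.fundIdealSet) ∧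
      (∀ r ∈ I.fundSet, ∀ a ∈ I.fundIdealSet, r * a ∈ I.fundIdealSet)) ∧
    (∀ a ∈ I.fundIdealSet, ∀ r ∈ I.fundSet,
      (1 + r * a) ∈ I.fundSet ∧ ∃ b ∈ I.fundSet, (1 + r * a) * b = 1) := by
  have := SMulCommClass.symm K₀ R M
  have hlen : Module.length R M = d := WithBot.coe_injective ((Module.coe_length R M).trans hM)
  have hres {a : K} (ha : a ∈ I.fundSet) := I.specializes_residue ha
  have hideal {r a : K} (hr : r ∈ I.fundSet) (ha : I.Specializes a 0) :
      I.Specializes (r * a) 0 := by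
    simpa using (hres hr).mul hlen ha
  refine ⟨⟨I.fundSubalgebra hlen, rfl⟩,
    ⟨I.residue, fun a ha => hres ha, ?_, ?_, ?_, ?_, ?_, ?_, ?_⟩,
    ⟨fun a ha => ⟨0, ha⟩, ?_, fun r hr a ha => hideal hr ha⟩, ?_⟩
  · exact fun a _ φ h => h.residue_eq.symm
  · exact fun a ha b hb => ((hres ha).add hlen (hres hb)).residue_eq
  · exact fun a ha b hb => ((hres ha).mul hlen (hres hb)).residue_eq
  · exact (I.specializes_one hlen).residue_eq
  · intro q u
    simp [(I.specializes_algebraMap hlen q).residue_eq]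
  · intro q a ha u
    rw [((hres ha).algebraMap_mul hlen q).residue_eq, LinearMap.smul_apply]
  · exact fun a ha =>
      ⟨Inflator.Specializes.residue_eq, fun h => show I.Specializes a 0 from h ▸ hres ha⟩
  · exact fun a ha b hb => show I.Specializes _ 0 by simpa using ha.add hlen hb
  intro a ha r hr
  have hunit : I.Specializes (1 + r * a) 1 := by
    simpa using (I.specializes_one hlen).add hlen (hideal hr ha)
  have : Nontrivial M := Module.length_pos_iff.mp (by rw [hlen]; exact_mod_cast hd)
  have hne : 1 + r * a ≠ 0 := hunit.ne_zero hlen one_ne_zero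
  exact ⟨⟨1, hunit⟩, _, ⟨1, hunit.inv hne (mul_one 1) (mul_one 1)⟩,
    mul_inv_cancel₀ hne⟩

/-- For a `d`-inflator `ς` on `K`: the fundamental ring is a `K₀`-subalgebra of `K`;
each of its elements specializes to a unique endomorphism, and the resulting
generalized residue map is a (`K₀`-linear, unital) ring homomorphism sending
`q ∈ K₀` to `q • id`; the fundamental ideal is its kernel, an ideal of the
fundamental ring; and the fundamental ideal lies in the Jacobson radical, so that in
particular every element of `1 + I_ς` is a unit of the fundamental ring. -/
theorem fundamental_ring_and_ideal
    {K₀ K R M : Type*} [Field K₀] [Infinite K₀] [Field K] [Algebra K₀ K]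
    [Ring R] [Algebra K₀ R] [AddCommGroup M] [Module R M] [Module K₀ M]
    [SMulCommClass K₀ R M] {d : ℕ} (hd : 1 ≤ d) [IsSemisimpleModule R M]
    (hM : moduleLength R M = ((d : ℕ∞) : WithBot ℕ∞))
    (I : Inflator K₀ K R M d) :
    (∃ A : Subalgebra K₀ K, (A : Set K) = I.fundSet) ∧
    (∃ res : K → Module.End R M,
      (∀ a ∈ I.fundSet, I.Specializes a (res a)) ∧
      (∀ a ∈ I.fundSet, ∀ φ : Module.End R M, I.Specializes a φ → φ = res a) ∧
      (∀ a ∈ I.fundSet, ∀ b ∈ I.fundSet, res (a + b) = res a + res b) ∧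
      (∀ a ∈ I.fundSet, ∀ b ∈ I.fundSet, res (a * b) = res a * res b) ∧
      res 1 = 1 ∧
      (∀ (q : K₀) (u : M), res (algebraMap K₀ K q) u = q • u) ∧
      (∀ (q : K₀), ∀ a ∈ I.fundSet, ∀ u : M,
        res (algebraMap K₀ K q * a) u = q • res a u) ∧
      (∀ a ∈ I.fundSet, (a ∈ I.fundIdealSet ↔ res a = 0))) ∧
    (I.fundIdealSet ⊆ I.fundSet ∧
      (∀ a ∈ I.fundIdealSet, ∀ b ∈ I.fundIdealSet, a + b ∈ I.fundIdealSet) ∧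
      (∀ r ∈ I.fundSet, ∀ a ∈ I.fundIdealSet, r * a ∈ I.fundIdealSet)) ∧
    (∀ a ∈ I.fundIdealSet, ∀ r ∈ I.fundSet,
      (1 + r * a) ∈ I.fundSet ∧ ∃ b ∈ I.fundSet, (1 + r * a) * b = 1) :=
  fundamental_ring_and_ideal_general hd hM I
end

section
/- Let K be a field and O_1, …, O_m pairwise incomparable valuation subrings of K (for i ≠ j, neither O_i ⊆ O_j nor O_j ⊆ O_i), with maximal ideals 𝔪_1, …, 𝔪_m. Let R = O_1 ∩ ⋯ ∩ O_m. Then for every n ≥ 1, every K-linear subspace V ≤ K^n, and every index i, one has (V ∩ R^n) + 𝔪_i^n = (V ∩ O_i^n) + 𝔪_i^n as additive subgroups of O_i^n; equivalently, the image of V ∩ R^n under the coordinatewise residue map O_i^n → (O_i/𝔪_i)^n equals the image of V ∩ O_i^n. -/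
/-!
Given `v ∈ V` with coordinates in `O i`, it suffices to find `s ∈ ⋂ₗ O l` with `s ≡ 1 mod 𝔪ᵢ`
such that `s • v` has coordinates in every `O l`: then `s • v ∈ V ∩ Rⁿ` and
`v - s • v = (1 - s) • v ∈ 𝔪ᵢⁿ`. Such `s` form a monoid, so one coordinate `x ∈ O i` at a time
suffices. Incomparability gives `z` with `|z|ᵢ < 1` and `|z|ₗ > 1` for `l ≠ i`; for a suitable
`k ≥ 1` the element `c = zᵏ x` has `|c|ₗ ≠ 1` for every `l`, hence `|1 + c|ₗ = max 1 |c|ₗ`, and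
`s = (1 + c)⁻¹` works.
-/

namespace Valuation

variable {K Γ₀ : Type*} [Field K] [LinearOrderedCommGroupWithZero Γ₀] (v : Valuation K Γ₀)

lemma map_one_add_of_ne_one {c : K} (hc : v c ≠ 1) : v (1 + c) = max 1 (v c) := by
  rw [map_add_of_distinct_val _ (by rwa [map_one, ne_comm]), map_one]

lemma map_inv_one_add_le_one {c : K} (hc : v c ≠ 1) : v (1 + c)⁻¹ ≤ 1 := by
  rw [map_inv₀, map_one_add_of_ne_one v hc]
  exact inv_le_one_of_one_le₀ (le_max_left _ _)

lemma map_inv_one_add_mul_le_one {c x : K} (hc : v c ≠ 1) (hx : v x ≤ max 1 (v c)) :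
    v ((1 + c)⁻¹ * x) ≤ 1 := by
  rw [map_mul, map_inv₀, map_one_add_of_ne_one v hc,
    inv_mul_le_one₀ (zero_lt_one.trans_le (le_max_left _ _))]
  exact hx

lemma map_inv_one_add_sub_one_lt_one {c : K} (hc : v c < 1) : v ((1 + c)⁻¹ - 1) < 1 := by
  have h1c : v (1 + c) = 1 := map_one_add_of_lt v hc
  have hne : 1 + c ≠ 0 := v.ne_zero_iff.1 (h1c ▸ one_ne_zero)
  rw [show (1 + c)⁻¹ - 1 = -c * (1 + c)⁻¹ by field_simp; ring, map_mul, map_neg, map_inv₀,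
    h1c, inv_one, mul_one]
  exact hc

end Valuation

lemma exists_pow_valuation_ne {K ι : Type*} [Field K] [Finite ι] {Γ : ι → Type*}
    [∀ l, LinearOrderedCommGroupWithZero (Γ l)] (v : ∀ l, Valuation K (Γ l)) (z y : K) :
    ∃ k ≠ 0, ∀ l, 1 < v l z → v l (z ^ k) ≠ v l y := by
  set bad : Set ℕ := ⋃ l, {k | 1 < v l z ∧ v l (z ^ k) = v l y}
  have hbad : bad.Finite := Set.finite_iUnion fun l => Set.Subsingleton.finite
    fun k₁ h₁ k₂ h₂ => by
      simp only [Set.mem_ofPred_eq, map_pow] at h₁ h₂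
      exact pow_right_injective₀ (zero_lt_one.trans h₁.1) h₁.1.ne' (h₁.2.trans h₂.2.symm)
  obtain ⟨k, hk⟩ := (hbad.union (Set.finite_singleton 0)).infinite_compl.nonempty
  simp only [Set.mem_compl_iff, Set.mem_union, Set.mem_singleton_iff, not_or] at hk
  refine ⟨k, hk.2, fun l hl hk' => hk.1 (Set.mem_iUnion.2 ⟨l, hl, hk'⟩)⟩

namespace ValuationSubring

variable {K : Type*} [Field K]

lemma exists_valuation_lt_one_one_lt_valuation {A B : ValuationSubring K} (hAB : ¬ A ≤ B)
    (hBA : ¬ B ≤ A) : ∃ t : K, A.valuation t < 1 ∧ 1 < B.valuation t := by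
  obtain ⟨b, hbA, hbB⟩ := SetLike.not_le_iff_exists.1 hAB
  obtain ⟨a, haB, haA⟩ := SetLike.not_le_iff_exists.1 hBA
  rw [← valuation_le_one_iff, not_le] at hbB haA
  rw [← valuation_le_one_iff] at hbA haB
  have ha : a ≠ 0 := by rintro rfl; simp at haA
  refine ⟨b / a, ?_, ?_⟩
  · rw [map_div₀, div_lt_one₀ (zero_lt_one.trans haA)]
    exact hbA.trans_lt haA
  · rw [map_div₀, one_lt_div₀ (B.valuation.pos_iff.2 ha)]
    exact haB.trans_lt hbB

lemma mul_mem_nonunits {A : ValuationSubring K} {x a : K} (hx : x ∈ A.nonunits) (ha : a ∈ A) :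
    x * a ∈ A.nonunits := by
  rw [mem_nonunits_iff, map_mul]
  exact mul_lt_one_of_lt_of_le (A.mem_nonunits_iff.1 hx) ((A.valuation_le_one_iff a).2 ha)

end ValuationSubring

section Family

variable {K ι : Type*} [Field K] (O : ι → ValuationSubring K)

open ValuationSubring

lemma exists_valuation_lt_one_forall_ne_one_lt_valuation [Finite ι]
    (hO : Pairwise fun i j => ¬ O i ≤ O j) (i : ι) :
    ∃ z : K, (O i).valuation z < 1 ∧ ∀ l ≠ i, 1 < (O l).valuation z := by
  classical
  have := Fintype.ofFinite ι
  suffices ∀ S : Finset ι, i ∉ S →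
      ∃ z : K, (O i).valuation z < 1 ∧ ∀ l ∈ S, 1 < (O l).valuation z by
    simpa using this (Finset.univ.erase i) (by simp)
  intro S
  induction S using Finset.induction_on with
  | empty => exact fun _ => ⟨0, by simp, by simp⟩
  | insert w S _ ih =>
    rw [Finset.mem_insert, not_or]
    rintro ⟨hiw, hiS⟩
    obtain ⟨z, hzi, hzS⟩ := ih hiS
    obtain ⟨t, hti, htw⟩ :=
      exists_valuation_lt_one_one_lt_valuation (hO hiw) (hO (Ne.symm hiw))
    obtain ⟨k, hk, hkz⟩ := exists_pow_valuation_ne (fun l => (O l).valuation) z t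
    refine ⟨z ^ k + t, Valuation.map_add_lt _ ?_ hti, fun l hl => ?_⟩
    · rw [map_pow]
      exact pow_lt_one₀ zero_le hzi hk
    -- the choice of `k` rules out cancellation in `z ^ k + t`
    by_cases hzl : 1 < (O l).valuation z
    · rw [Valuation.map_add_of_distinct_val _ (hkz l hzl), lt_max_iff, map_pow]
      exact Or.inl (one_lt_pow₀ hzl hk)
    · have hl : l = w :=
        (Finset.mem_insert.1 hl).resolve_right fun hl => hzl (hzS l hl)
      subst hl
      have hlt : (O l).valuation (z ^ k) < (O l).valuation t := by
        rw [map_pow]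
        exact (pow_le_one₀ zero_le (not_lt.1 hzl)).trans_lt htw
      rw [Valuation.map_add_eq_of_lt_right _ hlt]
      exact htw

def principalInter (i : ι) : Submonoid K where
  carrier := {s | (∀ l, s ∈ O l) ∧ s - 1 ∈ (O i).nonunits}
  one_mem' := ⟨fun l => (O l).one_mem, by simp⟩
  mul_mem' := by
    rintro s s' ⟨hs, hs1⟩ ⟨hs', hs'1⟩
    refine ⟨fun l => mul_mem (hs l) (hs' l), ?_⟩
    rw [show s * s' - 1 = (s' - 1) * s + (s - 1) by ring]
    exact add_mem (mul_mem_nonunits hs'1 (hs i)) hs1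

variable {O} [Finite ι]

lemma exists_mem_principalInter_mul_mem (hO : Pairwise fun i j => ¬ O i ≤ O j) {i : ι} {x : K}
    (hx : x ∈ O i) : ∃ s ∈ principalInter O i, ∀ l, s * x ∈ O l := by
  obtain ⟨z, hzi, hz⟩ := exists_valuation_lt_one_forall_ne_one_lt_valuation O hO i
  obtain ⟨k, hk, hkz⟩ := exists_pow_valuation_ne (fun l => (O l).valuation) z x⁻¹
  rw [← valuation_le_one_iff] at hx
  have hci : (O i).valuation (z ^ k * x) < 1 := by
    rw [map_mul, map_pow]
    exact mul_lt_one_of_lt_of_le (pow_lt_one₀ zero_le hzi hk) hx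
  have key : ∀ l, (O l).valuation (z ^ k * x) ≠ 1 ∧
      (O l).valuation x ≤ max 1 ((O l).valuation (z ^ k * x)) := by
    intro l
    rcases eq_or_ne l i with rfl | hl
    · exact ⟨hci.ne, le_max_of_le_left hx⟩
    refine ⟨fun h => hkz l (hz l hl) ?_, le_max_of_le_right ?_⟩
    · rw [map_mul, map_inv₀] at *
      exact eq_inv_of_mul_eq_one_left h
    · rw [map_mul, map_pow]
      exact le_mul_of_one_le_left zero_le (one_lt_pow₀ (hz l hl) hk).le
  refine ⟨(1 + z ^ k * x)⁻¹, ⟨fun l => ?_, ?_⟩, fun l => ?_⟩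
  · rw [← valuation_le_one_iff]
    exact (O l).valuation.map_inv_one_add_le_one (key l).1
  · exact (mem_nonunits_iff _).2 ((O i).valuation.map_inv_one_add_sub_one_lt_one hci)
  · rw [← valuation_le_one_iff]
    exact (O l).valuation.map_inv_one_add_mul_le_one (key l).1 (key l).2

lemma exists_mem_principalInter_forall_mul_mem (hO : Pairwise fun i j => ¬ O i ≤ O j) {i : ι}
    {α : Type*} [Finite α] {x : α → K} (hx : ∀ j, x j ∈ O i) :
    ∃ s ∈ principalInter O i, ∀ j l, s * x j ∈ O l := by
  classical
  have := Fintype.ofFinite α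
  suffices ∀ T : Finset α, ∃ s ∈ principalInter O i, ∀ j ∈ T, ∀ l, s * x j ∈ O l by
    simpa using this Finset.univ
  intro T
  induction T using Finset.induction_on with
  | empty => exact ⟨1, one_mem _, by simp⟩
  | insert a T _ ih =>
    obtain ⟨s, hs, hsx⟩ := ih
    obtain ⟨s', hs', hs'x⟩ := exists_mem_principalInter_mul_mem hO (hx a)
    refine ⟨s * s', mul_mem hs hs', fun j hj l => ?_⟩
    rcases Finset.mem_insert.1 hj with rfl | hj
    · rw [mul_assoc]
      exact mul_mem (hs.1 l) (hs'x l)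
    · rw [mul_right_comm]
      exact mul_mem (hsx j hj l) (hs'.1 l)

end Family

/-- Let `O₁, …, Oₘ` be pairwise incomparable valuation subrings of a field `K`, with
maximal ideals `𝔪₁, …, 𝔪ₘ` (the nonunits), and let `R = O₁ ∩ ⋯ ∩ Oₘ`.  Then for
every subspace `V ≤ K^n` and every index `i`, one has
`(V ∩ R^n) + 𝔪ᵢ^n = (V ∩ Oᵢ^n) + 𝔪ᵢ^n` inside `K^n`. -/
theorem multiValuation_approximation
    {K : Type*} [Field K] (m : ℕ) (O : Fin m → ValuationSubring K)
    (hinc : ∀ i j : Fin m, i ≠ j → ¬((O i : Set K) ⊆ (O j : Set K)))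
    (n : ℕ) (V : Submodule K (Fin n → K)) (i : Fin m) :
    {x : Fin n → K | ∃ v ∈ V, (∀ (j : Fin n) (l : Fin m), v j ∈ O l) ∧
        ∃ w : Fin n → K, (∀ j : Fin n, w j ∈ (O i).nonunits) ∧ x = v + w} =
    {x : Fin n → K | ∃ v ∈ V, (∀ j : Fin n, v j ∈ O i) ∧
        ∃ w : Fin n → K, (∀ j : Fin n, w j ∈ (O i).nonunits) ∧ x = v + w} := by
  ext x
  constructor
  · rintro ⟨v, hvV, hvR, w, hw, rfl⟩
    exact ⟨v, hvV, fun j => hvR j i, w, hw, rfl⟩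
  · rintro ⟨v, hvV, hvO, w, hw, rfl⟩
    obtain ⟨s, ⟨-, hs⟩, hsv⟩ := exists_mem_principalInter_forall_mul_mem (hinc · · ·) hvO
    have h1s : 1 - s ∈ (O i).nonunits := by
      rw [← neg_sub]
      exact neg_mem hs
    exact ⟨s • v, V.smul_mem s hvV, hsv, (1 - s) • v + w,
      fun j => add_mem (ValuationSubring.mul_mem_nonunits h1s (hvO j)) (hw j), by module⟩
end
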